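/- arXiv:2107.12196 — 2 statements merged into one kernel-verified Lean document; each statement's English description precedes it below -/
import Mathlib

section
/- Let m ≥ 3 be odd (the group G(m,m,2)). Then there is an isomorphism of R-modules S/(z) ≅ (⊕_{j=1}^{(m−1)/2} Coker([[Y, 2X^{m−j}],[2X^{j}, Y]])^{2}) ⊕ R/(Y² − 4X^m), where M^{2} denotes the direct sum of two copies of the module M. -/
open MvPolynomial

noncomputable section

/-- `S = ℂ[x,y]` -/
abbrev Spoly : Type := MvPolynomial Bool ℂ

/-- `R = ℂ[X,Y]` -/
abbrev Rpoly : Type := MvPolynomial (Fin 2) ℂ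

def xv : Spoly := X false
def yv : Spoly := X true
def Xv : Rpoly := X 0
def Yv : Rpoly := X 1

/-- The map `R → S`, `X ↦ xy`, `Y ↦ x^m + y^m` (basic invariants of `G(m,m,2)`). -/
def phi (m : ℕ) : Rpoly →+* Spoly :=
  (aeval ![xv * yv, xv ^ m + yv ^ m]).toRingHom

/-- `z = x^m - y^m`. -/
def zpol (m : ℕ) : Spoly := xv ^ m - yv ^ m

/-- Cokernel of a 2×2 matrix over `R`. -/
abbrev coker (A : Matrix (Fin 2) (Fin 2) Rpoly) : Type :=
  (Fin 2 → Rpoly) ⧸ LinearMap.range A.mulVecLin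

namespace Stmt9

/-! ### Monomial bookkeeping -/

def eS (A B : ℕ) : Bool →₀ ℕ := Finsupp.single false A + Finsupp.single true B
def eR (A C : ℕ) : Fin 2 →₀ ℕ := Finsupp.single 0 A + Finsupp.single 1 C

@[simp] lemma eS_false (A B : ℕ) : eS A B false = A := by simp [eS]
@[simp] lemma eS_true (A B : ℕ) : eS A B true = B := by simp [eS]
@[simp] lemma eR_zero (A C : ℕ) : eR A C 0 = A := by simp [eR]
@[simp] lemma eR_one (A C : ℕ) : eR A C 1 = C := by simp [eR]

lemma eS_inj {A B A' B' : ℕ} (h : eS A B = eS A' B') : A = A' ∧ B = B' := by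
  constructor
  · have := DFunLike.congr_fun h false; simpa using this
  · have := DFunLike.congr_fun h true; simpa using this

lemma eR_inj {A B A' B' : ℕ} (h : eR A B = eR A' B') : A = A' ∧ B = B' := by
  constructor
  · have := DFunLike.congr_fun h 0; simpa using this
  · have := DFunLike.congr_fun h 1; simpa using this

lemma eS_eta (d : Bool →₀ ℕ) : eS (d false) (d true) = d := by
  ext b; cases b <;> simp

lemma eR_eta (d : Fin 2 →₀ ℕ) : eR (d 0) (d 1) = d := by
  ext i; fin_cases i <;> simp

lemma mono_eS (A B : ℕ) : (monomial (eS A B) 1 : Spoly) = xv ^ A * yv ^ B := by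
  rw [eS, xv, yv, X_pow_eq_monomial, X_pow_eq_monomial, monomial_mul, one_mul]

lemma mono_eR (A C : ℕ) : (monomial (eR A C) 1 : Rpoly) = Xv ^ A * Yv ^ C := by
  rw [eR, Xv, Yv, X_pow_eq_monomial, X_pow_eq_monomial, monomial_mul, one_mul]

lemma S_monomial_eq (d : Bool →₀ ℕ) (c : ℂ) :
    (monomial d c : Spoly) = c • (xv ^ (d false) * yv ^ (d true)) := by
  rw [← mono_eS, eS_eta, smul_monomial, smul_eq_mul, mul_one]

lemma R_monomial_eq (d : Fin 2 →₀ ℕ) (c : ℂ) :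
    (monomial d c : Rpoly) = c • (Xv ^ (d 0) * Yv ^ (d 1)) := by
  rw [← mono_eR, eR_eta, smul_monomial, smul_eq_mul, mul_one]

/-! ### independence master lemma -/

lemma indep_of_retraction {M P ι : Type*} [AddCommGroup M] [Module ℂ M] [AddCommGroup P]
    [Module ℂ P] (f : M →ₗ[ℂ] P) (ρ : M →ₗ[ℂ] M) (v : ι → M)
    (h0 : ∀ x, f x = 0 → ρ x = 0) (hv : LinearIndependent ℂ (fun i => ρ (v i))) :
    LinearIndependent ℂ (fun i => f (v i)) := by
  rw [linearIndependent_iff] at hv ⊢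
  intro l hl
  apply hv
  have h1 : f (Finsupp.linearCombination ℂ v l) = 0 := by
    rw [Finsupp.apply_linearCombination]; exact hl
  have h2 := h0 _ h1
  rw [Finsupp.apply_linearCombination] at h2
  exact h2

/-! ### the reduction retraction on `S` -/

variable (m : ℕ)

def rhoS : Spoly →ₗ[ℂ] Spoly :=
  (basisMonomials Bool ℂ).constr ℂ fun d =>
    (monomial (eS (d false % m) (d true + m * (d false / m))) 1 : Spoly)

lemma rhoS_mono (A B : ℕ) :
    rhoS m (xv ^ A * yv ^ B) = (monomial (eS (A % m) (B + m * (A / m))) 1 : Spoly) := by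
  have h : (xv ^ A * yv ^ B : Spoly) = (basisMonomials Bool ℂ) (eS A B) := by
    rw [← mono_eS]; exact (congrFun (coe_basisMonomials Bool ℂ) (eS A B)).symm
  rw [h, rhoS, Module.Basis.constr_basis]
  simp

lemma rhoS_z (hm : 0 < m) (p : Spoly) : rhoS m (zpol m * p) = 0 := by
  have : (rhoS m) ∘ₗ (LinearMap.mulLeft ℂ (zpol m)) = 0 := by
    apply (basisMonomials Bool ℂ).ext
    intro d
    have hd : (basisMonomials Bool ℂ) d = xv ^ (d false) * yv ^ (d true) := by
      rw [show ((basisMonomials Bool ℂ) d : Spoly) = monomial d 1 from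
        congrFun (coe_basisMonomials Bool ℂ) d, ← mono_eS, eS_eta]
    simp only [LinearMap.comp_apply, LinearMap.mulLeft_apply, LinearMap.zero_apply, hd]
    have hz : zpol m * (xv ^ (d false) * yv ^ (d true)) =
        xv ^ (d false + m) * yv ^ (d true) - xv ^ (d false) * yv ^ (d true + m) := by
      rw [zpol]; ring
    rw [hz, map_sub, rhoS_mono, rhoS_mono]
    rw [Nat.add_mod_right, Nat.add_div_right _ hm]
    rw [sub_eq_zero]
    congr 1
    congr 1
    ring
  have := LinearMap.congr_fun this p
  simpa using this

end Stmt9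
namespace Stmt9

def XY (A C : ℕ) : Rpoly := Xv ^ A * Yv ^ C

def Dl (m : ℕ) : Rpoly := Yv ^ 2 - 4 * Xv ^ m

lemma four_eq : (4 : Rpoly) = C (4 : ℂ) := (map_ofNat (C : ℂ →+* Rpoly) 4).symm

lemma XY_eq_mono (A C : ℕ) : XY A C = (monomial (eR A C) 1 : Rpoly) := (mono_eR A C).symm

lemma basisMonomials_R (d : Fin 2 →₀ ℕ) :
    (basisMonomials (Fin 2) ℂ) d = XY (d 0) (d 1) := by
  rw [show ((basisMonomials (Fin 2) ℂ) d : Rpoly) = monomial d 1 from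
    congrFun (coe_basisMonomials (Fin 2) ℂ) d, XY_eq_mono, eR_eta]

variable (m : ℕ)

def rhoD : Rpoly →ₗ[ℂ] Rpoly :=
  (basisMonomials (Fin 2) ℂ).constr ℂ fun d =>
    ((4:ℂ) ^ (d 1 / 2)) • XY (d 0 + m * (d 1 / 2)) (d 1 % 2)

lemma rhoD_mono (A A' : ℕ) :
    rhoD m (XY A A') = ((4:ℂ) ^ (A' / 2)) • XY (A + m * (A' / 2)) (A' % 2) := by
  have h : (XY A A' : Rpoly) = (basisMonomials (Fin 2) ℂ) (eR A A') := by
    rw [basisMonomials_R]; simp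
  rw [h, rhoD, Module.Basis.constr_basis]
  simp

lemma rhoD_D (p : Rpoly) : rhoD m (Dl m * p) = 0 := by
  have key : (rhoD m) ∘ₗ (LinearMap.mulLeft ℂ (Dl m)) = 0 := by
    apply (basisMonomials (Fin 2) ℂ).ext
    intro d
    simp only [LinearMap.comp_apply, LinearMap.mulLeft_apply, LinearMap.zero_apply,
      basisMonomials_R]
    have hz : Dl m * XY (d 0) (d 1) =
        XY (d 0) (d 1 + 2) - (4:ℂ) • XY (d 0 + m) (d 1) := by
      simp only [Dl, XY, smul_eq_C_mul, ← four_eq]; ring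
    rw [hz, map_sub, map_smul, rhoD_mono, rhoD_mono]
    rw [show (d 1 + 2) / 2 = d 1 / 2 + 1 by omega, show (d 1 + 2) % 2 = d 1 % 2 by omega]
    rw [sub_eq_zero, smul_smul]
    congr 1
    · rw [pow_succ]; ring
    · congr 1; ring
  have := LinearMap.congr_fun key p
  simpa using this

/-! ### basis of `R/(Δ)` -/

abbrev QD := Rpoly ⧸ Ideal.span {Dl m}

def mkD : Rpoly →ₗ[ℂ] QD m := ((Ideal.span {Dl m}).mkQ).restrictScalars ℂ

lemma mkD_eq_zero {x : Rpoly} (h : mkD m x = 0) : ∃ q, x = Dl m * q := by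
  have hx : x ∈ Ideal.span {Dl m} := by
    rwa [mkD, LinearMap.restrictScalars_apply, Submodule.mkQ_apply,
      Submodule.Quotient.mk_eq_zero] at h
  rcases Ideal.mem_span_singleton.mp hx with ⟨q, hq⟩
  exact ⟨q, hq⟩

def vD : Fin 2 × ℕ → Rpoly := fun p => XY p.2 p.1.val

lemma rhoD_vD (p : Fin 2 × ℕ) : rhoD m (vD p) = vD p := by
  obtain ⟨c, a⟩ := p
  have h2 : c.val / 2 = 0 := by omega
  have h3 : c.val % 2 = c.val := by omega
  rw [vD, rhoD_mono, h2, h3]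
  simp

lemma indepD : LinearIndependent ℂ (fun p => mkD m (vD p)) := by
  apply indep_of_retraction (mkD m) (rhoD m) (vD)
  · intro x hx
    rcases mkD_eq_zero m hx with ⟨q, rfl⟩
    exact rhoD_D m q
  · have he : (fun p => rhoD m (vD p)) =
        (⇑(basisMonomials (Fin 2) ℂ)) ∘ (fun p : Fin 2 × ℕ => eR p.2 p.1.val) := by
      funext p
      simp only [Function.comp_apply]
      rw [rhoD_vD, basisMonomials_R]
      simp [vD]
    rw [he]
    apply (basisMonomials (Fin 2) ℂ).linearIndependent.comp
    intro p q h
    obtain ⟨h1, h2⟩ := eR_inj h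
    exact Prod.ext (Fin.ext h2) h1

lemma spanD_mono (A' : ℕ) : ∀ A : ℕ, mkD m (XY A A') ∈
    Submodule.span ℂ (Set.range (fun p => mkD m (vD p))) := by
  induction A' using Nat.strong_induction_on with
  | _ C ih =>
    intro A
    by_cases hC : C < 2
    · exact Submodule.subset_span ⟨(⟨C, hC⟩, A), rfl⟩
    · obtain ⟨C', rfl⟩ : ∃ C', C = C' + 2 := ⟨C - 2, by omega⟩
      have hrel : mkD m (XY A (C' + 2)) = (4:ℂ) • mkD m (XY (A + m) C') := by
        rw [← map_smul]
        have heq : XY A (C' + 2) - (4:ℂ) • XY (A + m) C' = Dl m * XY A C' := by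
          simp only [Dl, XY, smul_eq_C_mul, ← four_eq]; ring
        have hmem : XY A (C' + 2) - (4:ℂ) • XY (A + m) C' ∈ Ideal.span {Dl m} := by
          rw [heq]; exact Ideal.mem_span_singleton.mpr (dvd_mul_right _ _)
        have : mkD m (XY A (C' + 2) - (4:ℂ) • XY (A + m) C') = 0 := by
          rw [mkD, LinearMap.restrictScalars_apply, Submodule.mkQ_apply,
            Submodule.Quotient.mk_eq_zero]
          exact hmem
        rw [map_sub, sub_eq_zero] at this
        exact this
      rw [hrel]
      exact Submodule.smul_mem _ _ (ih C' (by omega) (A + m))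

lemma spanD_all (p : Rpoly) :
    mkD m p ∈ Submodule.span ℂ (Set.range (fun p => mkD m (vD p))) := by
  induction p using MvPolynomial.induction_on' with
  | monomial u a =>
    rw [R_monomial_eq, ← XY, map_smul]
    exact Submodule.smul_mem _ _ (spanD_mono m (u 1) (u 0))
  | add p q hp hq =>
    rw [map_add]
    exact Submodule.add_mem _ hp hq

lemma spanD : ⊤ ≤ Submodule.span ℂ (Set.range (fun p => mkD m (vD p))) := by
  intro x _
  obtain ⟨p, rfl⟩ := Submodule.Quotient.mk_surjective _ x
  exact spanD_all m p

def bD : Module.Basis (Fin 2 × ℕ) ℂ (QD m) := Module.Basis.mk (indepD m) (spanD m)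

end Stmt9
namespace Stmt9

def Amat (k l : ℕ) : Matrix (Fin 2) (Fin 2) Rpoly := !![Yv, 2 * Xv ^ l; 2 * Xv ^ k, Yv]

abbrev M2 : Type := Fin 2 → Rpoly

def Ncok (k l : ℕ) : Submodule Rpoly M2 := LinearMap.range (Amat k l).mulVecLin

def bM2 : Module.Basis ((_ : Fin 2) × (Fin 2 →₀ ℕ)) ℂ M2 := Pi.basis fun _ => basisMonomials (Fin 2) ℂ

lemma bM2_apply (ε : Fin 2) (d : Fin 2 →₀ ℕ) :
    bM2 ⟨ε, d⟩ = Pi.single ε (XY (d 0) (d 1)) := by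
  rw [bM2, Pi.basis_apply]
  show (Pi.single ε ((basisMonomials (Fin 2) ℂ) d) : M2) = _
  rw [basisMonomials_R]

def rkval (m k l : ℕ) (ε : Fin 2) (A C : ℕ) : M2 :=
  if C % 2 = 0 then (Pi.single ε (((4:ℂ) ^ (C / 2)) • XY (A + m * (C / 2)) 0) : M2)
  else if ε = 0 then (Pi.single 1 ((-(2 * (4:ℂ) ^ (C / 2))) • XY (A + k + m * (C / 2)) 0) : M2)
  else (Pi.single 0 ((-(2 * (4:ℂ) ^ (C / 2))) • XY (A + l + m * (C / 2)) 0) : M2)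

def rhoK (m k l : ℕ) : M2 →ₗ[ℂ] M2 :=
  bM2.constr ℂ fun p => rkval m k l p.1 (p.2 0) (p.2 1)

lemma rhoK_single (m k l : ℕ) (ε : Fin 2) (A C : ℕ) :
    rhoK m k l (Pi.single ε (XY A C) : M2) = rkval m k l ε A C := by
  have h : (Pi.single ε (XY A C) : M2) = bM2 ⟨ε, eR A C⟩ := by rw [bM2_apply]; simp
  rw [h, rhoK, Module.Basis.constr_basis]
  simp

lemma two_eq : (2 : Rpoly) = C (2 : ℂ) := (map_ofNat (C : ℂ →+* Rpoly) 2).symm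

lemma two_smul_R (p : Rpoly) : (2:ℂ) • p = 2 * p := by rw [smul_eq_C_mul, ← two_eq]

lemma rkval_even (m k l : ℕ) (ε : Fin 2) (A C : ℕ) (h : C % 2 = 0) :
    rkval m k l ε A C = (Pi.single ε (((4:ℂ) ^ (C / 2)) • XY (A + m * (C / 2)) 0) : M2) := by
  rw [rkval, if_pos h]

lemma rkval_odd0 (m k l : ℕ) (A C : ℕ) (h : C % 2 = 1) :
    rkval m k l 0 A C =
      (Pi.single (1 : Fin 2) ((-(2 * (4:ℂ) ^ (C / 2))) • XY (A + k + m * (C / 2)) 0) : M2) := by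
  rw [rkval, if_neg (by omega), if_pos rfl]

lemma rkval_odd1 (m k l : ℕ) (A C : ℕ) (h : C % 2 = 1) :
    rkval m k l 1 A C =
      (Pi.single (0 : Fin 2) ((-(2 * (4:ℂ) ^ (C / 2))) • XY (A + l + m * (C / 2)) 0) : M2) := by
  rw [rkval, if_neg (by omega), if_neg (by decide)]

def col0 (k l : ℕ) : M2 := ![Yv, 2 * Xv ^ k]
def col1 (k l : ℕ) : M2 := ![2 * Xv ^ l, Yv]

lemma mulVec_eq (k l : ℕ) (v : M2) :
    (Amat k l).mulVecLin v = v 0 • col0 k l + v 1 • col1 k l := by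
  funext i
  fin_cases i <;>
    simp [Matrix.mulVecLin_apply, Matrix.mulVec, dotProduct, Fin.sum_univ_two,
      Amat, col0, col1, smul_eq_mul] <;> ring

lemma smul_col0 (k l A C : ℕ) : XY A C • col0 k l =
    (Pi.single (0 : Fin 2) (XY A (C + 1)) : M2) + (2:ℂ) • (Pi.single (1 : Fin 2) (XY (A + k) C) : M2) := by
  funext i
  fin_cases i <;> simp [col0, XY, smul_eq_mul, two_smul_R] <;> ring

lemma smul_col1 (k l A C : ℕ) : XY A C • col1 k l =
    (2:ℂ) • (Pi.single (0 : Fin 2) (XY (A + l) C) : M2) + (Pi.single (1 : Fin 2) (XY A (C + 1)) : M2) := by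
  funext i
  fin_cases i <;> simp [col1, XY, smul_eq_mul, two_smul_R] <;> ring

lemma single_csmul (i : Fin 2) (c : ℂ) (x : Rpoly) :
    c • (Pi.single i x : M2) = (Pi.single i (c • x) : M2) := by
  funext j
  by_cases h : j = i
  · subst h; simp
  · simp [Pi.single_eq_of_ne h]

lemma rhoK_col0 (m k l : ℕ) (hkl : k + l = m) (r : Rpoly) :
    rhoK m k l (r • col0 k l) = 0 := by
  have key : (rhoK m k l) ∘ₗ ((LinearMap.toSpanSingleton Rpoly M2
      (col0 k l)).restrictScalars ℂ) = 0 := by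
    apply (basisMonomials (Fin 2) ℂ).ext
    intro d
    simp only [LinearMap.comp_apply, LinearMap.restrictScalars_apply,
      LinearMap.toSpanSingleton_apply, LinearMap.zero_apply, basisMonomials_R]
    set A := d 0 with hA
    set C := d 1 with hC
    rw [smul_col0, map_add, map_smul, rhoK_single, rhoK_single]
    by_cases h : C % 2 = 0
    · have h1 : (C + 1) % 2 = 1 := by omega
      have h2 : (C + 1) / 2 = C / 2 := by omega
      rw [rkval_odd0 m k l A (C+1) h1, rkval_even m k l 1 (A+k) C h, h2,
        single_csmul, smul_smul, ← Pi.single_add, ← add_smul]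
      rw [show (-(2 * (4:ℂ) ^ (C / 2)) + 2 * 4 ^ (C / 2)) = 0 by ring]
      simp
    · have h1 : (C + 1) % 2 = 0 := by omega
      have h2 : (C + 1) / 2 = C / 2 + 1 := by omega
      rw [rkval_even m k l 0 A (C+1) h1, rkval_odd1 m k l (A+k) C (by omega), h2,
        single_csmul, smul_smul, ← Pi.single_add]
      rw [show A + k + l + m * (C / 2) = A + m * (C / 2 + 1) by rw [← hkl]; ring]
      rw [← add_smul]
      rw [show ((4:ℂ) ^ (C / 2 + 1) + 2 * -(2 * 4 ^ (C / 2))) = 0 by rw [pow_succ]; ring]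
      simp
  exact LinearMap.congr_fun key r

lemma rhoK_col1 (m k l : ℕ) (hkl : k + l = m) (r : Rpoly) :
    rhoK m k l (r • col1 k l) = 0 := by
  have key : (rhoK m k l) ∘ₗ ((LinearMap.toSpanSingleton Rpoly M2
      (col1 k l)).restrictScalars ℂ) = 0 := by
    apply (basisMonomials (Fin 2) ℂ).ext
    intro d
    simp only [LinearMap.comp_apply, LinearMap.restrictScalars_apply,
      LinearMap.toSpanSingleton_apply, LinearMap.zero_apply, basisMonomials_R]
    set A := d 0 with hA
    set C := d 1 with hC
    rw [smul_col1, map_add, map_smul, rhoK_single, rhoK_single]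
    by_cases h : C % 2 = 0
    · have h1 : (C + 1) % 2 = 1 := by omega
      have h2 : (C + 1) / 2 = C / 2 := by omega
      rw [rkval_even m k l 0 (A+l) C h, rkval_odd1 m k l A (C+1) h1, h2,
        single_csmul, smul_smul, ← Pi.single_add, ← add_smul]
      rw [show ((2:ℂ) * 4 ^ (C / 2) + -(2 * 4 ^ (C / 2))) = 0 by ring]
      simp
    · have h1 : (C + 1) % 2 = 0 := by omega
      have h2 : (C + 1) / 2 = C / 2 + 1 := by omega
      rw [rkval_odd0 m k l (A+l) C (by omega), rkval_even m k l 1 A (C+1) h1, h2,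
        single_csmul, smul_smul, ← Pi.single_add]
      rw [show A + l + k + m * (C / 2) = A + m * (C / 2 + 1) by rw [← hkl]; ring]
      rw [← add_smul]
      rw [show ((2:ℂ) * -(2 * 4 ^ (C / 2)) + 4 ^ (C / 2 + 1)) = 0 by rw [pow_succ]; ring]
      simp
  exact LinearMap.congr_fun key r

lemma rhoK_N (m k l : ℕ) (hkl : k + l = m) {w : M2} (hw : w ∈ Ncok k l) :
    rhoK m k l w = 0 := by
  rcases hw with ⟨v, rfl⟩
  rw [mulVec_eq, map_add]
  have h0 : v 0 • col0 k l = (v 0 : Rpoly) • col0 k l := rfl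
  rw [rhoK_col0 m k l hkl, rhoK_col1 m k l hkl, add_zero]

end Stmt9
namespace Stmt9

abbrev Cok (k l : ℕ) : Type := coker (Amat k l)

def mkC (k l : ℕ) : M2 →ₗ[ℂ] Cok k l :=
  ((LinearMap.range (Amat k l).mulVecLin).mkQ).restrictScalars ℂ

lemma mkC_eq_zero {k l : ℕ} {x : M2} :
    mkC k l x = 0 ↔ x ∈ LinearMap.range (Amat k l).mulVecLin := by
  rw [mkC, LinearMap.restrictScalars_apply, Submodule.mkQ_apply, Submodule.Quotient.mk_eq_zero]

def vC : Fin 2 × ℕ → M2 := fun p => (Pi.single p.1 (XY p.2 0) : M2)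

lemma rhoK_vC (m k l : ℕ) (p : Fin 2 × ℕ) : rhoK m k l (vC p) = vC p := by
  rw [vC, rhoK_single, rkval_even m k l p.1 p.2 0 (by omega)]
  simp

lemma indepC (m k l : ℕ) (hkl : k + l = m) :
    LinearIndependent ℂ (fun p => mkC k l (vC p)) := by
  apply indep_of_retraction (mkC k l) (rhoK m k l) vC
  · intro x hx
    exact rhoK_N m k l hkl (mkC_eq_zero.mp hx)
  · have he : (fun p => rhoK m k l (vC p)) =
        (⇑bM2) ∘ (fun p : Fin 2 × ℕ => (⟨p.1, eR p.2 0⟩ : (_ : Fin 2) × (Fin 2 →₀ ℕ))) := by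
      funext p
      simp only [Function.comp_apply]
      rw [rhoK_vC, bM2_apply]
      simp [vC]
    rw [he]
    apply bM2.linearIndependent.comp
    intro p q h
    simp only [Sigma.mk.inj_iff] at h
    obtain ⟨h1, h2⟩ := h
    obtain ⟨h3, -⟩ := eR_inj (eq_of_heq h2)
    exact Prod.ext h1 h3

lemma col0_mem (k l : ℕ) (r : Rpoly) : r • col0 k l ∈ LinearMap.range (Amat k l).mulVecLin := by
  refine ⟨![r, 0], ?_⟩
  rw [mulVec_eq]
  simp

lemma col1_mem (k l : ℕ) (r : Rpoly) : r • col1 k l ∈ LinearMap.range (Amat k l).mulVecLin := by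
  refine ⟨![0, r], ?_⟩
  rw [mulVec_eq]
  simp

lemma spanC_single (k l : ℕ) (C : ℕ) : ∀ (A : ℕ) (ε : Fin 2),
    mkC k l (Pi.single ε (XY A C) : M2) ∈
      Submodule.span ℂ (Set.range (fun p => mkC k l (vC p))) := by
  induction C with
  | zero => exact fun A ε => Submodule.subset_span ⟨(ε, A), rfl⟩
  | succ C ih =>
    intro A ε
    have hcase : ε = 0 ∨ ε = 1 := by omega
    rcases hcase with rfl | rfl
    · have hd : (Pi.single (0 : Fin 2) (XY A (C + 1)) : M2) =
          XY A C • col0 k l - (2:ℂ) • (Pi.single (1 : Fin 2) (XY (A + k) C) : M2) := by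
        rw [smul_col0]; abel
      have h0 : mkC k l (XY A C • col0 k l) = 0 := mkC_eq_zero.mpr (col0_mem k l _)
      rw [hd, map_sub, h0, zero_sub, map_smul]
      exact Submodule.neg_mem _ (Submodule.smul_mem _ _ (ih (A + k) 1))
    · have hd : (Pi.single (1 : Fin 2) (XY A (C + 1)) : M2) =
          XY A C • col1 k l - (2:ℂ) • (Pi.single (0 : Fin 2) (XY (A + l) C) : M2) := by
        rw [smul_col1]; abel
      have h0 : mkC k l (XY A C • col1 k l) = 0 := mkC_eq_zero.mpr (col1_mem k l _)
      rw [hd, map_sub, h0, zero_sub, map_smul]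
      exact Submodule.neg_mem _ (Submodule.smul_mem _ _ (ih (A + l) 0))

lemma spanC (k l : ℕ) :
    ⊤ ≤ Submodule.span ℂ (Set.range (fun p => mkC k l (vC p))) := by
  have hsingle : ∀ (ε : Fin 2) (q : Rpoly),
      mkC k l (Pi.single ε q : M2) ∈
        Submodule.span ℂ (Set.range (fun p => mkC k l (vC p))) := by
    intro ε q
    induction q using MvPolynomial.induction_on' with
    | monomial u a =>
      have : (monomial u a : Rpoly) = a • XY (u 0) (u 1) := by
        rw [R_monomial_eq, XY]
      rw [this, ← single_csmul, map_smul]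
      exact Submodule.smul_mem _ _ (spanC_single k l (u 1) (u 0) ε)
    | add p q hp hq =>
      have : (Pi.single ε (p + q) : M2) = Pi.single ε p + Pi.single ε q := by
        rw [Pi.single_add]
      rw [this, map_add]
      exact Submodule.add_mem _ hp hq
  intro x _
  obtain ⟨w, rfl⟩ := Submodule.Quotient.mk_surjective _ x
  have hw : (Submodule.Quotient.mk w : Cok k l) = mkC k l w := rfl
  have hdec : w = (Pi.single 0 (w 0) : M2) + (Pi.single 1 (w 1) : M2) := by
    funext i
    fin_cases i <;> simp
  rw [hw, hdec, map_add]
  exact Submodule.add_mem _ (hsingle 0 (w 0)) (hsingle 1 (w 1))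

def bC (m k l : ℕ) (hkl : k + l = m) : Module.Basis (Fin 2 × ℕ) ℂ (Cok k l) :=
  Module.Basis.mk (indepC m k l hkl) (spanC k l)

lemma bC_apply (m k l : ℕ) (hkl : k + l = m) (p : Fin 2 × ℕ) :
    bC m k l hkl p = mkC k l (vC p) := by
  rw [bC, Module.Basis.mk_apply]

end Stmt9
set_option synthInstance.maxHeartbeats 1000000
set_option maxHeartbeats 1000000
namespace Stmt9

abbrev Qz (m : ℕ) : Type := Spoly ⧸ Ideal.span {zpol m}

instance QzMod (m : ℕ) : Module Rpoly (Qz m) :=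
  ((Ideal.Quotient.mk (Ideal.span {zpol m})).comp (phi m)).toModule

def mkS (m : ℕ) : Spoly →+* Qz m := Ideal.Quotient.mk (Ideal.span {zpol m})

lemma qsmul_def (m : ℕ) (r : Rpoly) (x : Qz m) : r • x = mkS m (phi m r) * x := rfl

lemma qsmul_mk (m : ℕ) (r : Rpoly) (s : Spoly) :
    r • (mkS m s) = mkS m (phi m r * s) := by
  rw [qsmul_def, ← map_mul]

lemma csmul_mk (m : ℕ) (c : ℂ) (s : Spoly) : c • mkS m s = mkS m (c • s) := by
  exact (Submodule.Quotient.mk_smul (Ideal.span {zpol m}) c s).symm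

instance QzTower (m : ℕ) : IsScalarTower ℂ Rpoly (Qz m) := by
  constructor
  intro c r x
  rw [qsmul_def, qsmul_def]
  have h1 : phi m (c • r) = c • phi m r := by
    rw [phi]
    exact map_smul (aeval ![xv * yv, xv ^ m + yv ^ m]) c r
  rw [h1]
  have h2 : mkS m (c • phi m r) = c • mkS m (phi m r) := (csmul_mk m c _).symm
  rw [h2, smul_mul_assoc]

lemma phi_X (m : ℕ) : phi m Xv = xv * yv := by
  rw [phi, Xv]
  simp

lemma phi_Y (m : ℕ) : phi m Yv = xv ^ m + yv ^ m := by
  rw [phi, Yv]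
  simp

lemma mkS_z_mul (m : ℕ) (c : Spoly) : mkS m (zpol m * c) = 0 := by
  rw [mkS, Ideal.Quotient.eq_zero_iff_mem]
  exact Ideal.mem_span_singleton.mpr (dvd_mul_right _ _)

/-- the four generators `x^k, -y^l, y^k, -x^l` -/
def tval (m k l : ℕ) : Fin 2 → Fin 2 → Qz m :=
  ![![mkS m (xv ^ k), -mkS m (yv ^ l)], ![mkS m (yv ^ k), -mkS m (xv ^ l)]]

lemma rel_A (m k l : ℕ) (hkl : k + l = m) (i : Fin 2) :
    Yv • tval m k l i 0 + (2 * Xv ^ k) • tval m k l i 1 = 0 := by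
  have hcase : i = 0 ∨ i = 1 := by omega
  have h2 : phi m (2 * Xv ^ k) = 2 * (xv * yv) ^ k := by
    rw [map_mul, map_pow, phi_X, map_ofNat]
  rcases hcase with rfl | rfl
  · show Yv • mkS m (xv ^ k) + (2 * Xv ^ k) • (-mkS m (yv ^ l)) = 0
    rw [smul_neg, qsmul_mk, qsmul_mk, phi_Y, h2, ← sub_eq_add_neg, ← map_sub]
    have : (xv ^ m + yv ^ m) * xv ^ k - 2 * (xv * yv) ^ k * yv ^ l =
        zpol m * xv ^ k := by
      rw [zpol, ← hkl]; ring
    rw [this, mkS_z_mul]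
  · show Yv • mkS m (yv ^ k) + (2 * Xv ^ k) • (-mkS m (xv ^ l)) = 0
    rw [smul_neg, qsmul_mk, qsmul_mk, phi_Y, h2, ← sub_eq_add_neg, ← map_sub]
    have : (xv ^ m + yv ^ m) * yv ^ k - 2 * (xv * yv) ^ k * xv ^ l =
        zpol m * (-(yv ^ k)) := by
      rw [zpol, ← hkl]; ring
    rw [this, mkS_z_mul]

lemma rel_B (m k l : ℕ) (hkl : k + l = m) (i : Fin 2) :
    (2 * Xv ^ l) • tval m k l i 0 + Yv • tval m k l i 1 = 0 := by
  have hcase : i = 0 ∨ i = 1 := by omega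
  have h2 : phi m (2 * Xv ^ l) = 2 * (xv * yv) ^ l := by
    rw [map_mul, map_pow, phi_X, map_ofNat]
  rcases hcase with rfl | rfl
  · show (2 * Xv ^ l) • mkS m (xv ^ k) + Yv • (-mkS m (yv ^ l)) = 0
    rw [smul_neg, qsmul_mk, qsmul_mk, phi_Y, h2, ← sub_eq_add_neg, ← map_sub]
    have : 2 * (xv * yv) ^ l * xv ^ k - (xv ^ m + yv ^ m) * yv ^ l =
        zpol m * yv ^ l := by
      rw [zpol, ← hkl]; ring
    rw [this, mkS_z_mul]
  · show (2 * Xv ^ l) • mkS m (yv ^ k) + Yv • (-mkS m (xv ^ l)) = 0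
    rw [smul_neg, qsmul_mk, qsmul_mk, phi_Y, h2, ← sub_eq_add_neg, ← map_sub]
    have : 2 * (xv * yv) ^ l * yv ^ k - (xv ^ m + yv ^ m) * xv ^ l =
        zpol m * (-(xv ^ l)) := by
      rw [zpol, ← hkl]; ring
    rw [this, mkS_z_mul]

def gmap (m k l : ℕ) (i : Fin 2) : M2 →ₗ[Rpoly] Qz m :=
  (LinearMap.toSpanSingleton Rpoly (Qz m) (tval m k l i 0)).comp (LinearMap.proj 0) +
    (LinearMap.toSpanSingleton Rpoly (Qz m) (tval m k l i 1)).comp (LinearMap.proj 1)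

lemma gmap_apply (m k l : ℕ) (i : Fin 2) (v : M2) :
    gmap m k l i v = v 0 • tval m k l i 0 + v 1 • tval m k l i 1 := rfl

lemma gmap_ker (m k l : ℕ) (hkl : k + l = m) (i : Fin 2) :
    LinearMap.range (Amat k l).mulVecLin ≤ LinearMap.ker (gmap m k l i) := by
  rintro _ ⟨v, rfl⟩
  rw [LinearMap.mem_ker, mulVec_eq, gmap_apply]
  have e0 : (v 0 • col0 k l + v 1 • col1 k l) 0 = v 0 * Yv + v 1 * (2 * Xv ^ l) := by
    simp [col0, col1, smul_eq_mul]
  have e1 : (v 0 • col0 k l + v 1 • col1 k l) 1 = v 0 * (2 * Xv ^ k) + v 1 * Yv := by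
    simp [col0, col1, smul_eq_mul]
  rw [e0, e1]
  have expand : (v 0 * Yv + v 1 * (2 * Xv ^ l)) • tval m k l i 0 +
      (v 0 * (2 * Xv ^ k) + v 1 * Yv) • tval m k l i 1 =
      v 0 • (Yv • tval m k l i 0 + (2 * Xv ^ k) • tval m k l i 1) +
      v 1 • ((2 * Xv ^ l) • tval m k l i 0 + Yv • tval m k l i 1) := by
    rw [add_smul, add_smul, smul_add, smul_add, ← mul_smul, ← mul_smul, ← mul_smul, ← mul_smul]
    abel
  rw [expand, rel_A m k l hkl i, rel_B m k l hkl i, smul_zero, smul_zero, add_zero]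

def Fcop (m k l : ℕ) (hkl : k + l = m) (i : Fin 2) : Cok k l →ₗ[Rpoly] Qz m :=
  Submodule.liftQ _ (gmap m k l i) (gmap_ker m k l hkl i)

lemma phi_D (m : ℕ) : phi m (Dl m) = zpol m * zpol m := by
  rw [Dl, zpol, map_sub, map_pow, map_mul, map_pow, phi_X, phi_Y, map_ofNat]
  ring

def FD (m : ℕ) : (Rpoly ⧸ Ideal.span {Dl m}) →ₗ[Rpoly] Qz m :=
  Submodule.liftQ (Ideal.span {Dl m}) (LinearMap.toSpanSingleton Rpoly (Qz m) (mkS m 1)) (by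
    rw [Ideal.span_le]
    intro x hx
    rcases Set.mem_singleton_iff.mp hx with rfl
    rw [SetLike.mem_coe, LinearMap.mem_ker, LinearMap.toSpanSingleton_apply]
    rw [qsmul_mk, mul_one, phi_D, mkS_z_mul])

end Stmt9
namespace Stmt9

abbrev TInd (m : ℕ) : Type :=
  ((j : Fin ((m - 1) / 2)) × ((_i : Fin 2) × (Fin 2 × ℕ))) ⊕ (Fin 2 × ℕ)

abbrev Tmod (m : ℕ) : Type :=
  ((j : Fin ((m - 1) / 2)) → Fin 2 → Cok ((j : ℕ) + 1) (m - ((j : ℕ) + 1))) ×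
    (Rpoly ⧸ Ideal.span {Dl m})

lemma hkl_j (m : ℕ) (j : Fin ((m - 1) / 2)) : ((j : ℕ) + 1) + (m - ((j : ℕ) + 1)) = m := by
  have := j.isLt
  omega

def Fpi (m : ℕ) :
    ((j : Fin ((m - 1) / 2)) → Fin 2 → Cok ((j : ℕ) + 1) (m - ((j : ℕ) + 1))) →ₗ[Rpoly] Qz m :=
  LinearMap.lsum Rpoly _ ℕ fun j =>
    LinearMap.lsum Rpoly _ ℕ fun i => Fcop m ((j : ℕ) + 1) (m - ((j : ℕ) + 1)) (hkl_j m j) i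

def Fbig (m : ℕ) : Tmod m →ₗ[Rpoly] Qz m := (Fpi m).coprod (FD m)

def bT (m : ℕ) : Module.Basis (TInd m) ℂ (Tmod m) :=
  (Pi.basis fun (j : Fin ((m - 1) / 2)) => Pi.basis fun (_i : Fin 2) =>
    bC m ((j : ℕ) + 1) (m - ((j : ℕ) + 1)) (hkl_j m j)).prod (bD m)

/-- the canonical lift in `S` of the image of a basis vector -/
def vSf (m : ℕ) : TInd m → Spoly
  | .inl ⟨j, i, ε, a⟩ =>
      if i = 0 then
        (if ε = 0 then xv ^ (a + ((j : ℕ) + 1)) * yv ^ a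
         else -(xv ^ a * yv ^ (a + (m - ((j : ℕ) + 1)))))
      else
        (if ε = 0 then xv ^ a * yv ^ (a + ((j : ℕ) + 1))
         else -(xv ^ (a + (m - ((j : ℕ) + 1))) * yv ^ a))
  | .inr (c, a) =>
      if c = 0 then xv ^ a * yv ^ a
      else xv ^ (a + m) * yv ^ a + xv ^ a * yv ^ (a + m)

lemma lsum_apply_single {ι : Type*} [Fintype ι] [DecidableEq ι] {M : ι → Type*}
    [∀ i, AddCommGroup (M i)] [∀ i, Module Rpoly (M i)] {N : Type*} [AddCommGroup N]
    [Module Rpoly N] (f : ∀ i, M i →ₗ[Rpoly] N) (i : ι) (x : M i) :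
    LinearMap.lsum Rpoly M ℕ f (Pi.single i x) = f i x := by
  rw [LinearMap.lsum_apply, LinearMap.sum_apply]
  rw [Finset.sum_eq_single i]
  · simp
  · intro j _ hj
    simp [LinearMap.comp_apply, Pi.single_eq_of_ne hj]
  · intro h
    exact absurd (Finset.mem_univ i) h

lemma bD_apply (m : ℕ) (p : Fin 2 × ℕ) : bD m p = mkD m (vD p) := by
  rw [bD, Module.Basis.mk_apply]

lemma tval_00 (m k l : ℕ) : tval m k l 0 0 = mkS m (xv ^ k) := by simp [tval]
lemma tval_01 (m k l : ℕ) : tval m k l 0 1 = -mkS m (yv ^ l) := by simp [tval]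
lemma tval_10 (m k l : ℕ) : tval m k l 1 0 = mkS m (yv ^ k) := by simp [tval]
lemma tval_11 (m k l : ℕ) : tval m k l 1 1 = -mkS m (xv ^ l) := by simp [tval]

lemma phi_XY0 (m a : ℕ) : phi m (XY a 0) = xv ^ a * yv ^ a := by
  rw [XY, pow_zero, mul_one, map_pow, phi_X, mul_pow]

lemma Fbig_bT (m : ℕ) (ind : TInd m) : Fbig m (bT m ind) = mkS m (vSf m ind) := by
  rcases ind with ⟨j, i, ε, a⟩ | ⟨c, a⟩
  · set k := (j : ℕ) + 1 with hk
    set l := m - ((j : ℕ) + 1) with hl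
    have hb : bT m (Sum.inl ⟨j, i, ε, a⟩) =
        (Pi.single j (Pi.single i (bC m k l (hkl_j m j) (ε, a))), 0) := by
      rw [bT, Module.Basis.prod_apply]
      simp only [Sum.elim_inl, Function.comp_apply, LinearMap.coe_inl]
      rw [Pi.basis_apply, Pi.basis_apply]
    rw [hb]
    have h1 : Fbig m (Pi.single j (Pi.single i (bC m k l (hkl_j m j) (ε, a))), 0) =
        Fpi m (Pi.single j (Pi.single i (bC m k l (hkl_j m j) (ε, a)))) := by
      rw [Fbig, LinearMap.coprod_apply, map_zero, add_zero]
    rw [h1, Fpi, lsum_apply_single, lsum_apply_single, bC_apply]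
    have hlift : Fcop m k l (hkl_j m j) i (mkC k l (vC (ε, a))) =
        gmap m k l i (vC (ε, a)) := Submodule.liftQ_apply _ _ _
    rw [hlift, gmap_apply]
    have hε : ε = 0 ∨ ε = 1 := by omega
    have hi : i = 0 ∨ i = 1 := by omega
    rcases hi with rfl | rfl <;> rcases hε with rfl | rfl
    · have hv : vC ((0 : Fin 2), a) 0 = XY a 0 ∧ vC ((0 : Fin 2), a) 1 = 0 := by
        constructor <;> simp [vC]
      rw [hv.1, hv.2, zero_smul, add_zero, tval_00, qsmul_mk, phi_XY0]
      have : vSf m (Sum.inl ⟨j, 0, 0, a⟩) = xv ^ (a + k) * yv ^ a := by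
        simp [vSf, ← hk]
      rw [this]
      congr 1
      ring
    · have hv : vC ((1 : Fin 2), a) 0 = 0 ∧ vC ((1 : Fin 2), a) 1 = XY a 0 := by
        constructor <;> simp [vC]
      rw [hv.1, hv.2, zero_smul, zero_add, tval_01, smul_neg, qsmul_mk, phi_XY0]
      have : vSf m (Sum.inl ⟨j, 0, 1, a⟩) = -(xv ^ a * yv ^ (a + l)) := by
        simp [vSf, ← hl]
      rw [this, map_neg]
      congr 2
      ring
    · have hv : vC ((0 : Fin 2), a) 0 = XY a 0 ∧ vC ((0 : Fin 2), a) 1 = 0 := by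
        constructor <;> simp [vC]
      rw [hv.1, hv.2, zero_smul, add_zero, tval_10, qsmul_mk, phi_XY0]
      have : vSf m (Sum.inl ⟨j, 1, 0, a⟩) = xv ^ a * yv ^ (a + k) := by
        simp [vSf, ← hk]
      rw [this]
      congr 1
      ring
    · have hv : vC ((1 : Fin 2), a) 0 = 0 ∧ vC ((1 : Fin 2), a) 1 = XY a 0 := by
        constructor <;> simp [vC]
      rw [hv.1, hv.2, zero_smul, zero_add, tval_11, smul_neg, qsmul_mk, phi_XY0]
      have : vSf m (Sum.inl ⟨j, 1, 1, a⟩) = -(xv ^ (a + l) * yv ^ a) := by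
        simp [vSf, ← hl]
      rw [this, map_neg]
      congr 2
      ring
  · have hb : bT m (Sum.inr (c, a)) = (0, bD m (c, a)) := by
      rw [bT, Module.Basis.prod_apply]
      simp only [Sum.elim_inr, Function.comp_apply, LinearMap.coe_inr]
    rw [hb]
    have h1 : Fbig m (0, bD m (c, a)) = FD m (bD m (c, a)) := by
      rw [Fbig, LinearMap.coprod_apply, map_zero, zero_add]
    rw [h1, bD_apply]
    have h2 : FD m (mkD m (vD (c, a))) =
        (vD (c, a)) • mkS m 1 := by
      rw [FD]
      exact Submodule.liftQ_apply _ _ _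
    rw [h2, qsmul_mk, mul_one]
    have hc : c = 0 ∨ c = 1 := by omega
    rcases hc with rfl | rfl
    · have : vSf m (Sum.inr ((0 : Fin 2), a)) = xv ^ a * yv ^ a := by simp [vSf]
      rw [this]
      have : vD ((0 : Fin 2), a) = XY a 0 := by simp [vD]
      rw [this, phi_XY0]
    · have hvs : vSf m (Sum.inr ((1 : Fin 2), a)) =
          xv ^ (a + m) * yv ^ a + xv ^ a * yv ^ (a + m) := by simp [vSf]
      rw [hvs]
      have : vD ((1 : Fin 2), a) = XY a 1 := by simp [vD]
      rw [this, XY, pow_one, map_mul, map_pow, phi_X, phi_Y]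
      congr 1
      ring

end Stmt9
namespace Stmt9

lemma mkS_congr (m : ℕ) {s s' : Spoly} (h : s = s') : mkS m s = mkS m s' := by rw [h]

lemma mkS_red (m A B : ℕ) :
    mkS m (xv ^ (A + m) * yv ^ B) = mkS m (xv ^ A * yv ^ (B + m)) := by
  rw [← sub_eq_zero, ← map_sub]
  have h : xv ^ (A + m) * yv ^ B - xv ^ A * yv ^ (B + m) = zpol m * (xv ^ A * yv ^ B) := by
    rw [zpol]; ring
  rw [h, mkS_z_mul]

lemma mkS_red_iter (m : ℕ) (t : ℕ) : ∀ A B : ℕ,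
    mkS m (xv ^ (A + m * t) * yv ^ B) = mkS m (xv ^ A * yv ^ (B + m * t)) := by
  induction t with
  | zero => intro A B; rw [mkS_congr m (by ring : (xv ^ (A + m * 0) * yv ^ B : Spoly) =
      xv ^ A * yv ^ B)]; exact mkS_congr m (by ring)
  | succ t ih =>
    intro A B
    have h1 : mkS m (xv ^ (A + m * (t + 1)) * yv ^ B) =
        mkS m (xv ^ ((A + m * t) + m) * yv ^ B) := mkS_congr m (by ring_nf)
    rw [h1, mkS_red, ih A (B + m)]
    exact mkS_congr m (by ring_nf)

lemma Ystep (m v w : ℕ) :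
    Yv • mkS m (xv ^ v * yv ^ w) = (2 : ℂ) • mkS m (xv ^ v * yv ^ (w + m)) := by
  rw [qsmul_mk, phi_Y]
  have h : (xv ^ m + yv ^ m) * (xv ^ v * yv ^ w) =
      xv ^ (v + m) * yv ^ w + xv ^ v * yv ^ (w + m) := by ring
  rw [h, map_add, mkS_red, two_smul]

lemma csmul_mem (m : ℕ) {q : Qz m} (c : ℂ) (h : q ∈ LinearMap.range (Fbig m)) :
    c • q ∈ LinearMap.range (Fbig m) := by
  rw [← algebraMap_smul Rpoly c q]
  exact Submodule.smul_mem _ _ h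

lemma mem_vSf (m : ℕ) (ind : TInd m) : mkS m (vSf m ind) ∈ LinearMap.range (Fbig m) :=
  ⟨bT m ind, Fbig_bT m ind⟩

lemma mem_one (m : ℕ) : mkS m 1 ∈ LinearMap.range (Fbig m) := by
  have h := mem_vSf m (Sum.inr (0, 0))
  have hv : vSf m (Sum.inr ((0 : Fin 2), 0)) = 1 := by simp [vSf]
  rwa [hv] at h

lemma mem_pure (m : ℕ) (hm : 3 ≤ m) (hmo : Odd m) (s : ℕ) (h1 : 1 ≤ s) (h2 : s ≤ m - 1) :
    mkS m (xv ^ s) ∈ LinearMap.range (Fbig m) ∧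
      mkS m (yv ^ s) ∈ LinearMap.range (Fbig m) := by
  obtain ⟨w, hw⟩ := hmo
  by_cases hs : s ≤ (m - 1) / 2
  · set j : Fin ((m - 1) / 2) := ⟨s - 1, by omega⟩ with hj
    have hkval : (j : ℕ) + 1 = s := by rw [hj]; simp; omega
    constructor
    · have h := mem_vSf m (Sum.inl ⟨j, 0, 0, 0⟩)
      have hv : vSf m (Sum.inl ⟨j, (0 : Fin 2), (0 : Fin 2), 0⟩) =
          xv ^ (0 + ((j : ℕ) + 1)) * yv ^ 0 := by simp [vSf]
      rw [hv, mkS_congr m (show (xv ^ (0 + ((j : ℕ) + 1)) * yv ^ 0 : Spoly) = xv ^ s by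
        rw [hkval]; ring)] at h
      exact h
    · have h := mem_vSf m (Sum.inl ⟨j, 1, 0, 0⟩)
      have hv : vSf m (Sum.inl ⟨j, (1 : Fin 2), (0 : Fin 2), 0⟩) =
          xv ^ 0 * yv ^ (0 + ((j : ℕ) + 1)) := by simp [vSf]
      rw [hv, mkS_congr m (show (xv ^ 0 * yv ^ (0 + ((j : ℕ) + 1)) : Spoly) = yv ^ s by
        rw [hkval]; ring)] at h
      exact h
  · set j : Fin ((m - 1) / 2) := ⟨m - s - 1, by omega⟩ with hj
    have hlval : m - ((j : ℕ) + 1) = s := by rw [hj]; simp; omega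
    constructor
    · have h := mem_vSf m (Sum.inl ⟨j, 1, 1, 0⟩)
      have hv : vSf m (Sum.inl ⟨j, (1 : Fin 2), (1 : Fin 2), 0⟩) =
          -(xv ^ (0 + (m - ((j : ℕ) + 1))) * yv ^ 0) := by simp [vSf]
      rw [hv, mkS_congr m (show (-(xv ^ (0 + (m - ((j : ℕ) + 1))) * yv ^ 0) : Spoly) =
        -(xv ^ s) by rw [hlval]; ring)] at h
      rw [map_neg] at h
      have := Submodule.neg_mem _ h
      rwa [neg_neg] at this
    · have h := mem_vSf m (Sum.inl ⟨j, 0, 1, 0⟩)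
      have hv : vSf m (Sum.inl ⟨j, (0 : Fin 2), (1 : Fin 2), 0⟩) =
          -(xv ^ 0 * yv ^ (0 + (m - ((j : ℕ) + 1)))) := by simp [vSf]
      rw [hv, mkS_congr m (show (-(xv ^ 0 * yv ^ (0 + (m - ((j : ℕ) + 1)))) : Spoly) =
        -(yv ^ s) by rw [hlval]; ring)] at h
      rw [map_neg] at h
      have := Submodule.neg_mem _ h
      rwa [neg_neg] at this

lemma powstep (m : ℕ) (v w : ℕ) (h : mkS m (xv ^ v * yv ^ w) ∈ LinearMap.range (Fbig m)) :
    mkS m (xv ^ v * yv ^ (w + m)) ∈ LinearMap.range (Fbig m) := by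
  have h2 : mkS m (xv ^ v * yv ^ (w + m)) =
      (2⁻¹ : ℂ) • (Yv • mkS m (xv ^ v * yv ^ w)) := by
    rw [Ystep, smul_smul]
    norm_num
  rw [h2]
  exact csmul_mem m _ (Submodule.smul_mem _ _ h)

lemma powiter (m : ℕ) (t : ℕ) : ∀ v w : ℕ,
    mkS m (xv ^ v * yv ^ w) ∈ LinearMap.range (Fbig m) →
    mkS m (xv ^ v * yv ^ (w + m * t)) ∈ LinearMap.range (Fbig m) := by
  induction t with
  | zero => intro v w h; rw [mkS_congr m (by ring_nf : (xv ^ v * yv ^ (w + m * 0) : Spoly) =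
      xv ^ v * yv ^ w)]; exact h
  | succ t ih =>
    intro v w h
    have := powstep m v (w + m * t) (ih v w h)
    rw [mkS_congr m (by ring_nf : (xv ^ v * yv ^ (w + m * t + m) : Spoly) =
      xv ^ v * yv ^ (w + m * (t + 1)))] at this
    exact this

lemma mem_purepow (m : ℕ) (hm : 3 ≤ m) (hmo : Odd m) (u : ℕ) :
    mkS m (xv ^ u) ∈ LinearMap.range (Fbig m) ∧
      mkS m (yv ^ u) ∈ LinearMap.range (Fbig m) := by
  have hm0 : 0 < m := by omega
  obtain ⟨s, t, hu, hsm'⟩ : ∃ s t, u = s + m * t ∧ s < m :=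
    ⟨u % m, u / m, (Nat.mod_add_div u m).symm, Nat.mod_lt u hm0⟩
  have hbase : mkS m (xv ^ s * yv ^ (0:ℕ)) ∈ LinearMap.range (Fbig m) ∧
      mkS m (xv ^ (0:ℕ) * yv ^ s) ∈ LinearMap.range (Fbig m) := by
    by_cases h0 : s = 0
    · subst h0
      constructor <;> · rw [mkS_congr m (by ring : (_ : Spoly) = 1)]; exact mem_one m
    · have hsm : s ≤ m - 1 := by omega
      obtain ⟨hx, hy⟩ := mem_pure m hm hmo s (by omega) hsm
      constructor
      · rw [mkS_congr m (by ring : (xv ^ s * yv ^ (0:ℕ) : Spoly) = xv ^ s)]; exact hx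
      · rw [mkS_congr m (by ring : (xv ^ (0:ℕ) * yv ^ s : Spoly) = yv ^ s)]; exact hy
  constructor
  · have h := powiter m t s 0 hbase.1
    rw [← mkS_red_iter] at h
    rw [mkS_congr m (show (xv ^ u : Spoly) = xv ^ (s + m * t) * yv ^ (0:ℕ) by
      rw [← hu]; ring)]
    exact h
  · have h := powiter m t 0 s hbase.2
    rw [mkS_congr m (show (yv ^ u : Spoly) = xv ^ (0:ℕ) * yv ^ (s + m * t) by
      rw [← hu]; ring)]
    exact h
end Stmt9
namespace Stmt9

def preF (m : ℕ) : TInd m → ℕ × ℕ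
  | .inl ⟨j, i, ε, a⟩ =>
      if i = 0 then
        (if ε = 0 then (a + ((j : ℕ) + 1), a) else (a, a + (m - ((j : ℕ) + 1))))
      else
        (if ε = 0 then (a, a + ((j : ℕ) + 1)) else (a + (m - ((j : ℕ) + 1)), a))
  | .inr (c, a) => if c = 0 then (a, a) else (a, a + m)

def ufac (m : ℕ) : TInd m → ℂˣ
  | .inl ⟨_, _, ε, _⟩ => if ε = 0 then 1 else -1
  | .inr (c, _) => if c = 0 then 1 else Units.mk0 2 two_ne_zero

lemma fin2_one : ((1 : Fin 2) = 0) = False := by decide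
lemma fin2_zero : ((0 : Fin 2) = 0) = True := by decide

lemma cast_val_inj (m : ℕ) (hm : 3 ≤ m) {e1 e2 : ℕ} (h1 : e1 < m) (h2 : e2 < m)
    (h : (e1 : ZMod m) = (e2 : ℕ)) : e1 = e2 := by
  haveI : NeZero m := ⟨by omega⟩
  rw [← ZMod.val_cast_of_lt h1, ← ZMod.val_cast_of_lt h2, h]

lemma cast_sub_m (m k l : ℕ) (hkl : k + l = m) : ((l : ℕ) : ZMod m) = -(k : ZMod m) := by
  have h : ((k + l : ℕ) : ZMod m) = 0 := by rw [hkl, ZMod.natCast_self]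
  push_cast at h
  linear_combination h

lemma zshape0 (m a k : ℕ) :
    (2 * ((a + k : ℕ) : ZMod m) - ((a + k + a : ℕ) : ZMod m)) = ((k : ℕ) : ZMod m) := by
  push_cast; ring

lemma zshape1 (m a k l : ℕ) (hkl : k + l = m) :
    (2 * ((a : ℕ) : ZMod m) - ((a + (a + l) : ℕ) : ZMod m)) = ((k : ℕ) : ZMod m) := by
  have h := cast_sub_m m k l hkl
  push_cast
  push_cast at h
  rw [h]; ring

lemma zshape2 (m a k l : ℕ) (hkl : k + l = m) :
    (2 * ((a : ℕ) : ZMod m) - ((a + (a + k) : ℕ) : ZMod m)) = ((l : ℕ) : ZMod m) := by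
  have h := cast_sub_m m k l hkl
  have h2 := cast_sub_m m l k (by omega)
  push_cast
  push_cast at h2
  rw [h2]; ring

lemma zshape3 (m a l : ℕ) :
    (2 * ((a + l : ℕ) : ZMod m) - ((a + l + a : ℕ) : ZMod m)) = ((l : ℕ) : ZMod m) := by
  push_cast; ring

lemma zshape4 (m a : ℕ) :
    (2 * ((a : ℕ) : ZMod m) - ((a + a : ℕ) : ZMod m)) = ((0 : ℕ) : ZMod m) := by
  push_cast; ring

lemma zshape5 (m a : ℕ) :
    (2 * ((a : ℕ) : ZMod m) - ((a + (a + m) : ℕ) : ZMod m)) = ((0 : ℕ) : ZMod m) := by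
  push_cast
  rw [ZMod.natCast_self]
  ring

lemma enc_inj (m : ℕ) (hm : 3 ≤ m) (hmo : Odd m) :
    Function.Injective (fun ind =>
      eS ((preF m ind).1 % m) ((preF m ind).2 + m * ((preF m ind).1 / m))) := by
  obtain ⟨w, hw⟩ := hmo
  intro t1 t2 h
  simp only at h
  obtain ⟨h1, h2⟩ := eS_inj h
  have hsum : (preF m t1).1 + (preF m t1).2 = (preF m t2).1 + (preF m t2).2 := by
    have d1 := Nat.div_add_mod (preF m t1).1 m
    have d2 := Nat.div_add_mod (preF m t2).1 m
    linarith
  have hw1 : (2 * ((preF m t1).1 : ZMod m) -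
      (((preF m t1).1 + (preF m t1).2 : ℕ) : ZMod m)) =
      (2 * ((preF m t2).1 : ZMod m) - (((preF m t2).1 + (preF m t2).2 : ℕ) : ZMod m)) := by
    have hc : (((preF m t1).1 % m : ℕ) : ZMod m) = (((preF m t2).1 % m : ℕ) : ZMod m) := by
      rw [h1]
    rw [ZMod.natCast_mod, ZMod.natCast_mod] at hc
    rw [hc, hsum]
  clear h h1 h2
  rcases t1 with ⟨j1, i1, ε1, a1⟩ | ⟨c1, a1⟩ <;> rcases t2 with ⟨j2, i2, ε2, a2⟩ | ⟨c2, a2⟩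
  · have hj1 := j1.isLt; have hj2 := j2.isLt
    have hi1 : i1 = 0 ∨ i1 = 1 := by omega
    have he1 : ε1 = 0 ∨ ε1 = 1 := by omega
    have hi2 : i2 = 0 ∨ i2 = 1 := by omega
    have he2 : ε2 = 0 ∨ ε2 = 1 := by omega
    rcases hi1 with rfl | rfl <;> rcases he1 with rfl | rfl <;>
      rcases hi2 with rfl | rfl <;> rcases he2 with rfl | rfl <;>
      simp only [preF, fin2_one, fin2_zero, if_true, if_false] at hsum hw1
    · rw [zshape0 m a1 ((j1 : ℕ) + 1), zshape0 m a2 ((j2 : ℕ) + 1)] at hw1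
      have hval := cast_val_inj m hm (by omega) (by omega) hw1
      have hjj : j1 = j2 := Fin.ext (by omega)
      subst hjj
      have haa : a1 = a2 := by omega
      subst haa
      rfl
    · rw [zshape0 m a1 ((j1 : ℕ) + 1), zshape1 m a2 ((j2 : ℕ) + 1) (m - ((j2 : ℕ) + 1)) (hkl_j m j2)] at hw1
      have hval := cast_val_inj m hm (by omega) (by omega) hw1
      exfalso; omega
    · rw [zshape0 m a1 ((j1 : ℕ) + 1), zshape2 m a2 ((j2 : ℕ) + 1) (m - ((j2 : ℕ) + 1)) (hkl_j m j2)] at hw1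
      have hval := cast_val_inj m hm (by omega) (by omega) hw1
      exfalso; omega
    · rw [zshape0 m a1 ((j1 : ℕ) + 1), zshape3 m a2 (m - ((j2 : ℕ) + 1))] at hw1
      have hval := cast_val_inj m hm (by omega) (by omega) hw1
      exfalso; omega
    · rw [zshape1 m a1 ((j1 : ℕ) + 1) (m - ((j1 : ℕ) + 1)) (hkl_j m j1), zshape0 m a2 ((j2 : ℕ) + 1)] at hw1
      have hval := cast_val_inj m hm (by omega) (by omega) hw1
      exfalso; omega
    · rw [zshape1 m a1 ((j1 : ℕ) + 1) (m - ((j1 : ℕ) + 1)) (hkl_j m j1), zshape1 m a2 ((j2 : ℕ) + 1) (m - ((j2 : ℕ) + 1)) (hkl_j m j2)] at hw1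
      have hval := cast_val_inj m hm (by omega) (by omega) hw1
      have hjj : j1 = j2 := Fin.ext (by omega)
      subst hjj
      have haa : a1 = a2 := by omega
      subst haa
      rfl
    · rw [zshape1 m a1 ((j1 : ℕ) + 1) (m - ((j1 : ℕ) + 1)) (hkl_j m j1), zshape2 m a2 ((j2 : ℕ) + 1) (m - ((j2 : ℕ) + 1)) (hkl_j m j2)] at hw1
      have hval := cast_val_inj m hm (by omega) (by omega) hw1
      exfalso; omega
    · rw [zshape1 m a1 ((j1 : ℕ) + 1) (m - ((j1 : ℕ) + 1)) (hkl_j m j1), zshape3 m a2 (m - ((j2 : ℕ) + 1))] at hw1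
      have hval := cast_val_inj m hm (by omega) (by omega) hw1
      exfalso; omega
    · rw [zshape2 m a1 ((j1 : ℕ) + 1) (m - ((j1 : ℕ) + 1)) (hkl_j m j1), zshape0 m a2 ((j2 : ℕ) + 1)] at hw1
      have hval := cast_val_inj m hm (by omega) (by omega) hw1
      exfalso; omega
    · rw [zshape2 m a1 ((j1 : ℕ) + 1) (m - ((j1 : ℕ) + 1)) (hkl_j m j1), zshape1 m a2 ((j2 : ℕ) + 1) (m - ((j2 : ℕ) + 1)) (hkl_j m j2)] at hw1
      have hval := cast_val_inj m hm (by omega) (by omega) hw1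
      exfalso; omega
    · rw [zshape2 m a1 ((j1 : ℕ) + 1) (m - ((j1 : ℕ) + 1)) (hkl_j m j1), zshape2 m a2 ((j2 : ℕ) + 1) (m - ((j2 : ℕ) + 1)) (hkl_j m j2)] at hw1
      have hval := cast_val_inj m hm (by omega) (by omega) hw1
      have hjj : j1 = j2 := Fin.ext (by omega)
      subst hjj
      have haa : a1 = a2 := by omega
      subst haa
      rfl
    · rw [zshape2 m a1 ((j1 : ℕ) + 1) (m - ((j1 : ℕ) + 1)) (hkl_j m j1), zshape3 m a2 (m - ((j2 : ℕ) + 1))] at hw1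
      have hval := cast_val_inj m hm (by omega) (by omega) hw1
      exfalso; omega
    · rw [zshape3 m a1 (m - ((j1 : ℕ) + 1)), zshape0 m a2 ((j2 : ℕ) + 1)] at hw1
      have hval := cast_val_inj m hm (by omega) (by omega) hw1
      exfalso; omega
    · rw [zshape3 m a1 (m - ((j1 : ℕ) + 1)), zshape1 m a2 ((j2 : ℕ) + 1) (m - ((j2 : ℕ) + 1)) (hkl_j m j2)] at hw1
      have hval := cast_val_inj m hm (by omega) (by omega) hw1
      exfalso; omega
    · rw [zshape3 m a1 (m - ((j1 : ℕ) + 1)), zshape2 m a2 ((j2 : ℕ) + 1) (m - ((j2 : ℕ) + 1)) (hkl_j m j2)] at hw1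
      have hval := cast_val_inj m hm (by omega) (by omega) hw1
      exfalso; omega
    · rw [zshape3 m a1 (m - ((j1 : ℕ) + 1)), zshape3 m a2 (m - ((j2 : ℕ) + 1))] at hw1
      have hval := cast_val_inj m hm (by omega) (by omega) hw1
      have hjj : j1 = j2 := Fin.ext (by omega)
      subst hjj
      have haa : a1 = a2 := by omega
      subst haa
      rfl
  · have hj1 := j1.isLt
    have hi1 : i1 = 0 ∨ i1 = 1 := by omega
    have he1 : ε1 = 0 ∨ ε1 = 1 := by omega
    have hc2 : c2 = 0 ∨ c2 = 1 := by omega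
    rcases hi1 with rfl | rfl <;> rcases he1 with rfl | rfl <;> rcases hc2 with rfl | rfl <;>
      simp only [preF, fin2_one, fin2_zero, if_true, if_false] at hsum hw1
    · rw [zshape0 m a1 ((j1 : ℕ) + 1), zshape4 m a2] at hw1
      have hval := cast_val_inj m hm (by omega) (by omega) hw1
      exfalso; omega
    · rw [zshape0 m a1 ((j1 : ℕ) + 1), zshape5 m a2] at hw1
      have hval := cast_val_inj m hm (by omega) (by omega) hw1
      exfalso; omega
    · rw [zshape1 m a1 ((j1 : ℕ) + 1) (m - ((j1 : ℕ) + 1)) (hkl_j m j1), zshape4 m a2] at hw1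
      have hval := cast_val_inj m hm (by omega) (by omega) hw1
      exfalso; omega
    · rw [zshape1 m a1 ((j1 : ℕ) + 1) (m - ((j1 : ℕ) + 1)) (hkl_j m j1), zshape5 m a2] at hw1
      have hval := cast_val_inj m hm (by omega) (by omega) hw1
      exfalso; omega
    · rw [zshape2 m a1 ((j1 : ℕ) + 1) (m - ((j1 : ℕ) + 1)) (hkl_j m j1), zshape4 m a2] at hw1
      have hval := cast_val_inj m hm (by omega) (by omega) hw1
      exfalso; omega
    · rw [zshape2 m a1 ((j1 : ℕ) + 1) (m - ((j1 : ℕ) + 1)) (hkl_j m j1), zshape5 m a2] at hw1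
      have hval := cast_val_inj m hm (by omega) (by omega) hw1
      exfalso; omega
    · rw [zshape3 m a1 (m - ((j1 : ℕ) + 1)), zshape4 m a2] at hw1
      have hval := cast_val_inj m hm (by omega) (by omega) hw1
      exfalso; omega
    · rw [zshape3 m a1 (m - ((j1 : ℕ) + 1)), zshape5 m a2] at hw1
      have hval := cast_val_inj m hm (by omega) (by omega) hw1
      exfalso; omega
  · have hj2 := j2.isLt
    have hc1 : c1 = 0 ∨ c1 = 1 := by omega
    have hi2 : i2 = 0 ∨ i2 = 1 := by omega
    have he2 : ε2 = 0 ∨ ε2 = 1 := by omega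
    rcases hc1 with rfl | rfl <;> rcases hi2 with rfl | rfl <;> rcases he2 with rfl | rfl <;>
      simp only [preF, fin2_one, fin2_zero, if_true, if_false] at hsum hw1
    · rw [zshape4 m a1, zshape0 m a2 ((j2 : ℕ) + 1)] at hw1
      have hval := cast_val_inj m hm (by omega) (by omega) hw1
      exfalso; omega
    · rw [zshape4 m a1, zshape1 m a2 ((j2 : ℕ) + 1) (m - ((j2 : ℕ) + 1)) (hkl_j m j2)] at hw1
      have hval := cast_val_inj m hm (by omega) (by omega) hw1
      exfalso; omega
    · rw [zshape4 m a1, zshape2 m a2 ((j2 : ℕ) + 1) (m - ((j2 : ℕ) + 1)) (hkl_j m j2)] at hw1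
      have hval := cast_val_inj m hm (by omega) (by omega) hw1
      exfalso; omega
    · rw [zshape4 m a1, zshape3 m a2 (m - ((j2 : ℕ) + 1))] at hw1
      have hval := cast_val_inj m hm (by omega) (by omega) hw1
      exfalso; omega
    · rw [zshape5 m a1, zshape0 m a2 ((j2 : ℕ) + 1)] at hw1
      have hval := cast_val_inj m hm (by omega) (by omega) hw1
      exfalso; omega
    · rw [zshape5 m a1, zshape1 m a2 ((j2 : ℕ) + 1) (m - ((j2 : ℕ) + 1)) (hkl_j m j2)] at hw1
      have hval := cast_val_inj m hm (by omega) (by omega) hw1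
      exfalso; omega
    · rw [zshape5 m a1, zshape2 m a2 ((j2 : ℕ) + 1) (m - ((j2 : ℕ) + 1)) (hkl_j m j2)] at hw1
      have hval := cast_val_inj m hm (by omega) (by omega) hw1
      exfalso; omega
    · rw [zshape5 m a1, zshape3 m a2 (m - ((j2 : ℕ) + 1))] at hw1
      have hval := cast_val_inj m hm (by omega) (by omega) hw1
      exfalso; omega
  · have hc1 : c1 = 0 ∨ c1 = 1 := by omega
    have hc2 : c2 = 0 ∨ c2 = 1 := by omega
    rcases hc1 with rfl | rfl <;> rcases hc2 with rfl | rfl <;>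
      simp only [preF, fin2_one, fin2_zero, if_true, if_false] at hsum hw1
    · have haa : a1 = a2 := by omega
      subst haa
      rfl
    · exfalso; omega
    · exfalso; omega
    · have haa : a1 = a2 := by omega
      subst haa
      rfl

end Stmt9
namespace Stmt9

lemma rhoS_vSf (m : ℕ) (hm : 0 < m) (ind : TInd m) :
    rhoS m (vSf m ind) = ((ufac m ind : ℂˣ) : ℂ) •
      (monomial (eS ((preF m ind).1 % m) ((preF m ind).2 + m * ((preF m ind).1 / m))) 1 :
        Spoly) := by
  rcases ind with ⟨j, i, ε, a⟩ | ⟨c, a⟩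
  · have hi : i = 0 ∨ i = 1 := by omega
    have he : ε = 0 ∨ ε = 1 := by omega
    rcases hi with rfl | rfl <;> rcases he with rfl | rfl <;>
      simp only [vSf, preF, ufac, fin2_one, fin2_zero, if_true, if_false] <;>
      first
      | (rw [rhoS_mono]; simp)
      | (rw [map_neg, rhoS_mono]; simp)
  · have hc : c = 0 ∨ c = 1 := by omega
    rcases hc with rfl | rfl <;> simp only [vSf, preF, ufac, fin2_one, fin2_zero, if_true, if_false]
    · rw [rhoS_mono]; simp
    · rw [map_add, rhoS_mono, rhoS_mono]
      have e1 : (a + m) % m = a % m := Nat.add_mod_right a m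
      have e2 : (a + m) / m = a / m + 1 := Nat.add_div_right a hm
      rw [e1, e2]
      have e3 : a + m * (a / m + 1) = a + m + m * (a / m) := by ring
      rw [e3]
      have : ((Units.mk0 (2:ℂ) two_ne_zero : ℂˣ) : ℂ) = 2 := rfl
      rw [this, two_smul]

def mkSL (m : ℕ) : Spoly →ₗ[ℂ] Qz m := ((Ideal.span {zpol m}).mkQ).restrictScalars ℂ

lemma mkSL_eq (m : ℕ) (s : Spoly) : mkSL m s = mkS m s := rfl

lemma indep_T (m : ℕ) (hm : 3 ≤ m) (hmo : Odd m) :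
    LinearIndependent ℂ (fun ind => mkSL m (vSf m ind)) := by
  apply indep_of_retraction (mkSL m) (rhoS m) (vSf m)
  · intro x hx
    have hmem : x ∈ Ideal.span {zpol m} := by
      rw [mkSL, LinearMap.restrictScalars_apply, Submodule.mkQ_apply,
        Submodule.Quotient.mk_eq_zero] at hx
      exact hx
    rcases Ideal.mem_span_singleton.mp hmem with ⟨q, rfl⟩
    exact rhoS_z m (by omega) q
  · have heq : (fun ind => rhoS m (vSf m ind)) = (ufac m) •
        ((⇑(basisMonomials Bool ℂ)) ∘ (fun ind =>
          eS ((preF m ind).1 % m) ((preF m ind).2 + m * ((preF m ind).1 / m)))) := by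
      funext ind
      rw [Pi.smul_apply', Function.comp_apply, rhoS_vSf m (by omega) ind, Units.smul_def]
      congr 1
    rw [heq]
    exact ((basisMonomials Bool ℂ).linearIndependent.comp _ (enc_inj m hm hmo)).units_smul
      (ufac m)

lemma Fbig_inj (m : ℕ) (hm : 3 ≤ m) (hmo : Odd m) : Function.Injective (Fbig m) := by
  have hindep : LinearIndependent ℂ (fun ind => ((Fbig m).restrictScalars ℂ) (bT m ind)) := by
    have heq : (fun ind => ((Fbig m).restrictScalars ℂ) (bT m ind)) =
        (fun ind => mkSL m (vSf m ind)) := by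
      funext ind
      rw [LinearMap.restrictScalars_apply, mkSL_eq]
      exact Fbig_bT m ind
    rw [heq]
    exact indep_T m hm hmo
  intro s t hst
  have hz : ((Fbig m).restrictScalars ℂ) (s - t) = 0 := by
    rw [LinearMap.restrictScalars_apply, map_sub, hst, sub_self]
  have hrep := Module.Basis.linearCombination_repr (bT m) (s - t)
  have hcomb : Finsupp.linearCombination ℂ
      (fun ind => ((Fbig m).restrictScalars ℂ) (bT m ind)) ((bT m).repr (s - t)) = 0 := by
    have : (fun ind => ((Fbig m).restrictScalars ℂ) (bT m ind)) =
        (⇑((Fbig m).restrictScalars ℂ)) ∘ (⇑(bT m)) := rfl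
    rw [this, ← Finsupp.apply_linearCombination, hrep, hz]
  have h0 := linearIndependent_iff.mp hindep _ hcomb
  have hzero : s - t = 0 := by rw [← hrep, h0, map_zero]
  exact sub_eq_zero.mp hzero

lemma mem_any (m : ℕ) (hm : 3 ≤ m) (hmo : Odd m) (A B : ℕ) :
    mkS m (xv ^ A * yv ^ B) ∈ LinearMap.range (Fbig m) := by
  rcases le_total A B with hAB | hAB
  · have hy := (mem_purepow m hm hmo (B - A)).2
    have hsm := Submodule.smul_mem (LinearMap.range (Fbig m)) (Xv ^ A) hy
    rw [qsmul_mk] at hsm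
    have hphi : phi m (Xv ^ A) * yv ^ (B - A) = xv ^ A * yv ^ B := by
      rw [map_pow, phi_X, mul_pow, mul_assoc, ← pow_add]
      congr 2
      omega
    rwa [hphi] at hsm
  · have hx := (mem_purepow m hm hmo (A - B)).1
    have hsm := Submodule.smul_mem (LinearMap.range (Fbig m)) (Xv ^ B) hx
    rw [qsmul_mk] at hsm
    have hphi : phi m (Xv ^ B) * xv ^ (A - B) = xv ^ A * yv ^ B := by
      rw [map_pow, phi_X, mul_pow]
      rw [show (xv ^ B * yv ^ B * xv ^ (A - B) : Spoly) = xv ^ (B + (A - B)) * yv ^ B by ring]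
      congr 2
      omega
    rwa [hphi] at hsm

lemma Fbig_surj (m : ℕ) (hm : 3 ≤ m) (hmo : Odd m) : Function.Surjective (Fbig m) := by
  have hall : ∀ p : Spoly, mkS m p ∈ LinearMap.range (Fbig m) := by
    intro p
    induction p using MvPolynomial.induction_on' with
    | monomial u a =>
      rw [S_monomial_eq, ← csmul_mk]
      exact csmul_mem m a (mem_any m hm hmo _ _)
    | add p q hp hq =>
      rw [map_add]
      exact Submodule.add_mem _ hp hq
  intro q
  obtain ⟨p, rfl⟩ := Ideal.Quotient.mk_surjective q
  exact hall p

end Stmt9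


theorem stmt9 (m : ℕ) (hm : 3 ≤ m) (hmo : Odd m) :
    letI : Module Rpoly (Spoly ⧸ Ideal.span {zpol m}) :=
      ((Ideal.Quotient.mk (Ideal.span {zpol m})).comp (phi m)).toModule
    Nonempty ((Spoly ⧸ Ideal.span {zpol m}) ≃ₗ[Rpoly]
      ((j : Fin ((m - 1) / 2)) → Fin 2 →
          coker !![Yv, 2 * Xv ^ (m - ((j : ℕ) + 1)); 2 * Xv ^ ((j : ℕ) + 1), Yv]) ×
      (Rpoly ⧸ Ideal.span {Yv ^ 2 - 4 * Xv ^ m})) :=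
  ⟨(LinearEquiv.ofBijective (Stmt9.Fbig m)
      ⟨Stmt9.Fbig_inj m hm hmo, Stmt9.Fbig_surj m hm hmo⟩).symm⟩
end
end

section
/- Let m ≥ 3 and let i be an integer with 1 ≤ i and 2i < m. Then the R-submodule of S/(z) generated by the residue classes of the four monomials x^{i}, y^{i}, x^{m−i}, y^{m−i} is isomorphic, as an R-module, to the direct sum of two copies of Coker([[Y, 2X^{m−i}],[2X^{i}, Y]]). -/
open MvPolynomial

noncomputable section

namespace Stmt11

set_option synthInstance.maxHeartbeats 1000000
set_option maxHeartbeats 1000000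

noncomputable def qmod (m : ℕ) : Module Rpoly (Spoly ⧸ Ideal.span {zpol m}) :=
  ((Ideal.Quotient.mk (Ideal.span {zpol m})).comp (phi m)).toModule

attribute [local instance] qmod

lemma smul_def (m : ℕ) (r : Rpoly) (q : Spoly ⧸ Ideal.span {zpol m}) :
    r • q = Ideal.Quotient.mk (Ideal.span {zpol m}) (phi m r) * q := rfl

lemma phi_X (m : ℕ) : phi m Xv = xv * yv := by simp [phi, Xv]

lemma phi_Y (m : ℕ) : phi m Yv = xv ^ m + yv ^ m := by simp [phi, Yv]

lemma phi_aevalX (m : ℕ) (p : Polynomial ℂ) :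
    phi m (Polynomial.aeval Xv p) = Polynomial.aeval (xv * yv) p := by
  show (aeval ![xv * yv, xv ^ m + yv ^ m]) (Polynomial.aeval Xv p) = _
  rw [← Polynomial.aeval_algHom_apply]
  congr 1
  simp [Xv]

/-- the diagonal scaling `x ↦ u x`, `y ↦ v y`. -/
def sg (u v : ℂ) : Spoly →ₐ[ℂ] Spoly :=
  aeval (fun b => if b then MvPolynomial.C v * yv else MvPolynomial.C u * xv)

lemma sg_x (u v : ℂ) : sg u v xv = MvPolynomial.C u * xv := by simp [sg, xv]

lemma sg_y (u v : ℂ) : sg u v yv = MvPolynomial.C v * yv := by simp [sg, yv]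


lemma geom_zero {n : ℕ} {μ : ℂ} (h1 : μ ^ n = 1) (h2 : μ ≠ 1) :
    ∑ k ∈ Finset.range n, μ ^ k = 0 := by
  have h := geom_sum_mul μ n
  rw [h1, sub_self] at h
  rcases mul_eq_zero.mp h with h' | h'
  · exact h'
  · exact absurd (sub_eq_zero.mp h') h2

lemma sg_zpol (m k : ℕ) (hm : 1 ≤ m) (ζ : ℂ) (hζ : ζ ^ (2 * m) = 1) :
    sg (ζ ^ k) (ζ ^ ((2 * m - 1) * k)) (zpol m) =
      MvPolynomial.C ((ζ ^ k) ^ m) * zpol m := by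
  have huv : (ζ ^ k) ^ m * (ζ ^ ((2 * m - 1) * k)) ^ m = 1 := by
    rw [← pow_mul, ← pow_mul, ← pow_add]
    have : k * m + (2 * m - 1) * k * m = (2 * m) * (k * m) := by
      have h1 : 2 * m - 1 + 1 = 2 * m := by omega
      calc k * m + (2 * m - 1) * k * m = ((2 * m - 1) + 1) * (k * m) := by ring
        _ = (2 * m) * (k * m) := by rw [h1]
    rw [this, pow_mul, hζ, one_pow]
  have huu : (ζ ^ k) ^ m * (ζ ^ k) ^ m = 1 := by
    rw [← pow_add, ← pow_mul]
    have : k * (m + m) = (2 * m) * k := by ring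
    rw [this, pow_mul, hζ, one_pow]
  have hne : (ζ ^ k) ^ m ≠ 0 := by
    intro h; rw [h, zero_mul] at huu; exact zero_ne_one huu
  have hvm : (ζ ^ ((2 * m - 1) * k)) ^ m = (ζ ^ k) ^ m :=
    mul_left_cancel₀ hne (huv.trans huu.symm)
  rw [zpol, map_sub, map_pow, map_pow, sg_x, sg_y, mul_pow, mul_pow,
    ← map_pow, ← map_pow, hvm]
  ring

lemma dvd_sg (m k : ℕ) (hm : 1 ≤ m) (ζ : ℂ) (hζ : ζ ^ (2 * m) = 1)
    (w : Spoly) (h : zpol m ∣ w) :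
    zpol m ∣ sg (ζ ^ k) (ζ ^ ((2 * m - 1) * k)) w := by
  obtain ⟨h₁, rfl⟩ := h
  rw [map_mul, sg_zpol m k hm ζ hζ]
  exact Dvd.dvd.mul_right (Dvd.dvd.mul_left dvd_rfl _) _

/-- The key extraction lemma: averaging over the `μ_{2m}`-action extracts
the weight-homogeneous parts of an element of the ideal `(z)`. -/
lemma extract (m : ℕ) (hm : 1 ≤ m) (ζ : ℂ) (hζ : IsPrimitiveRoot ζ (2 * m))
    (T : Fin 4 → Spoly) (e : Fin 4 → ℕ)
    (hT : ∀ j k, sg (ζ ^ k) (ζ ^ ((2 * m - 1) * k)) (T j) =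
      MvPolynomial.C (ζ ^ (e j * k)) * T j)
    (hdvd : zpol m ∣ ∑ j, T j)
    (c : ℕ) (j0 : Fin 4) (hj0 : 2 * m ∣ c + e j0)
    (hne : ∀ j, j ≠ j0 → ¬ (2 * m ∣ c + e j)) :
    zpol m ∣ T j0 := by
  have hζ1 : ζ ^ (2 * m) = 1 := hζ.pow_eq_one
  have hG : zpol m ∣ ∑ k ∈ Finset.range (2 * m),
      MvPolynomial.C (ζ ^ (c * k)) * sg (ζ ^ k) (ζ ^ ((2 * m - 1) * k)) (∑ j, T j) := by
    apply Finset.dvd_sum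
    intro k _
    exact Dvd.dvd.mul_left (dvd_sg m k hm ζ hζ1 _ hdvd) _
  have hGval : (∑ k ∈ Finset.range (2 * m),
      MvPolynomial.C (ζ ^ (c * k)) * sg (ζ ^ k) (ζ ^ ((2 * m - 1) * k)) (∑ j, T j))
      = MvPolynomial.C ((2 * m : ℕ) : ℂ) * T j0 := by
    have step1 : ∀ k, MvPolynomial.C (ζ ^ (c * k)) *
        sg (ζ ^ k) (ζ ^ ((2 * m - 1) * k)) (∑ j, T j)
        = ∑ j, MvPolynomial.C ((ζ ^ (c + e j)) ^ k) * T j := by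
      intro k
      rw [map_sum, Finset.mul_sum]
      apply Finset.sum_congr rfl
      intro j _
      rw [hT j k, ← mul_assoc, ← map_mul, ← pow_add, ← pow_mul]
      congr 2
      ring
    simp only [step1]
    rw [Finset.sum_comm]
    have inner : ∀ j : Fin 4, ∑ k ∈ Finset.range (2 * m),
        MvPolynomial.C ((ζ ^ (c + e j)) ^ k) * T j
        = MvPolynomial.C (∑ k ∈ Finset.range (2 * m), (ζ ^ (c + e j)) ^ k) * T j := by
      intro j
      rw [map_sum, Finset.sum_mul]
    simp only [inner]
    rw [Finset.sum_eq_single j0]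
    · congr 2
      have : ζ ^ (c + e j0) = 1 := (hζ.pow_eq_one_iff_dvd _).mpr hj0
      simp [this]
    · intro j _ hj
      have h1 : (ζ ^ (c + e j)) ^ (2 * m) = 1 := by
        rw [← pow_mul, mul_comm, pow_mul, hζ1, one_pow]
      have h2 : ζ ^ (c + e j) ≠ 1 := by
        intro h
        exact hne j hj ((hζ.pow_eq_one_iff_dvd _).mp h)
      rw [geom_zero h1 h2, map_zero, zero_mul]
    · intro h; exact absurd (Finset.mem_univ j0) h
  rw [hGval] at hG
  have h2m : ((2 * m : ℕ) : ℂ) ≠ 0 := by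
    simp; omega
  obtain ⟨h₁, hh⟩ := hG
  refine ⟨MvPolynomial.C (((2 * m : ℕ) : ℂ)⁻¹) * h₁, ?_⟩
  have := congrArg (fun t => MvPolynomial.C (((2 * m : ℕ) : ℂ)⁻¹) * t) hh
  rw [← mul_assoc, ← map_mul, inv_mul_cancel₀ h2m, map_one, one_mul] at this
  rw [this]; ring


lemma sg_xy (u v : ℂ) (huv : u * v = 1) : sg u v (xv * yv) = xv * yv := by
  rw [map_mul, sg_x, sg_y]
  calc MvPolynomial.C u * xv * (MvPolynomial.C v * yv)
      = MvPolynomial.C (u * v) * (xv * yv) := by rw [map_mul]; ring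
    _ = xv * yv := by rw [huv, map_one, one_mul]

lemma sg_aeval (u v : ℂ) (huv : u * v = 1) (p : Polynomial ℂ) :
    sg u v (Polynomial.aeval (xv * yv) p) = Polynomial.aeval (xv * yv) p := by
  rw [← Polynomial.aeval_algHom_apply, sg_xy u v huv]

lemma sg_px (u v : ℂ) (huv : u * v = 1) (p : Polynomial ℂ) (a : ℕ) :
    sg u v (Polynomial.aeval (xv * yv) p * xv ^ a) =
      MvPolynomial.C (u ^ a) * (Polynomial.aeval (xv * yv) p * xv ^ a) := by
  rw [map_mul, sg_aeval u v huv, map_pow, sg_x, mul_pow, map_pow]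
  ring

lemma sg_py (u v : ℂ) (huv : u * v = 1) (p : Polynomial ℂ) (b : ℕ) :
    sg u v (Polynomial.aeval (xv * yv) p * yv ^ b) =
      MvPolynomial.C (v ^ b) * (Polynomial.aeval (xv * yv) p * yv ^ b) := by
  rw [map_mul, sg_aeval u v huv, map_pow, sg_y, mul_pow, map_pow]
  ring

lemma uv_one (m k : ℕ) (hm : 1 ≤ m) (ζ : ℂ) (hζ : ζ ^ (2 * m) = 1) :
    ζ ^ k * ζ ^ ((2 * m - 1) * k) = 1 := by
  rw [← pow_add]
  have h1 : k + (2 * m - 1) * k = 2 * m * k := by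
    have : 2 * m - 1 + 1 = 2 * m := by omega
    calc k + (2 * m - 1) * k = ((2 * m - 1) + 1) * k := by ring
      _ = 2 * m * k := by rw [this]
  rw [h1, pow_mul, hζ, one_pow]

/-- evaluation `x, y ↦ t`. -/
def ev : Spoly →ₐ[ℂ] Polynomial ℂ := aeval (fun _ => Polynomial.X)

lemma ev_zpol (m : ℕ) : ev (zpol m) = 0 := by
  simp [ev, zpol, xv, yv]

lemma vanish_x (m a : ℕ) (hm : 1 ≤ m) (p : Polynomial ℂ)
    (h : zpol m ∣ Polynomial.aeval (xv * yv) p * xv ^ a) : p = 0 := by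
  obtain ⟨h₁, hh⟩ := h
  have := congrArg ev hh
  rw [map_mul, map_pow, map_mul, ev_zpol, zero_mul] at this
  have hx : ev xv = Polynomial.X := by simp [ev, xv]
  have haev : ev (Polynomial.aeval (xv * yv) p)
      = Polynomial.aeval (Polynomial.X * Polynomial.X : Polynomial ℂ) p := by
    rw [← Polynomial.aeval_algHom_apply]
    congr 1
    rw [map_mul, hx]
    simp [ev, yv]
  rw [haev, hx] at this
  have hXa : (Polynomial.X : Polynomial ℂ) ^ a ≠ 0 :=
    pow_ne_zero _ Polynomial.X_ne_zero
  have hz : Polynomial.aeval (Polynomial.X * Polynomial.X : Polynomial ℂ) p = 0 := by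
    rcases mul_eq_zero.mp this with h' | h'
    · exact h'
    · exact absurd h' hXa
  have hcomp : p.comp (Polynomial.X * Polynomial.X) = 0 := by
    rw [Polynomial.comp, ← Polynomial.algebraMap_eq, ← Polynomial.aeval_def]
    exact hz
  rcases (Polynomial.comp_eq_zero_iff).mp hcomp with h' | ⟨_, h'⟩
  · exact h'
  · exfalso
    have := congrArg Polynomial.natDegree h'
    rw [← pow_two, Polynomial.natDegree_X_pow, Polynomial.natDegree_C] at this
    omega

lemma vanish_y (m b : ℕ) (hm : 1 ≤ m) (p : Polynomial ℂ)
    (h : zpol m ∣ Polynomial.aeval (xv * yv) p * yv ^ b) : p = 0 := by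
  obtain ⟨h₁, hh⟩ := h
  have := congrArg ev hh
  rw [map_mul, map_pow, map_mul, ev_zpol, zero_mul] at this
  have hx : ev xv = Polynomial.X := by simp [ev, xv]
  have hy : ev yv = Polynomial.X := by simp [ev, yv]
  have haev : ev (Polynomial.aeval (xv * yv) p)
      = Polynomial.aeval (Polynomial.X * Polynomial.X : Polynomial ℂ) p := by
    rw [← Polynomial.aeval_algHom_apply]
    congr 1
    rw [map_mul, hx, hy]
  rw [haev, hy] at this
  have hXa : (Polynomial.X : Polynomial ℂ) ^ b ≠ 0 :=
    pow_ne_zero _ Polynomial.X_ne_zero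
  have hz : Polynomial.aeval (Polynomial.X * Polynomial.X : Polynomial ℂ) p = 0 := by
    rcases mul_eq_zero.mp this with h' | h'
    · exact h'
    · exact absurd h' hXa
  have hcomp : p.comp (Polynomial.X * Polynomial.X) = 0 := by
    rw [Polynomial.comp, ← Polynomial.algebraMap_eq, ← Polynomial.aeval_def]
    exact hz
  rcases (Polynomial.comp_eq_zero_iff).mp hcomp with h' | ⟨_, h'⟩
  · exact h'
  · exfalso
    have := congrArg Polynomial.natDegree h'
    rw [← pow_two, Polynomial.natDegree_X_pow, Polynomial.natDegree_C] at this
    omega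

lemma not_dvd_helper (D t s E : ℕ) (hE : E = D * t + s) (hs : 0 < s) (hsD : s < D) :
    ¬ D ∣ E := by
  intro h
  rw [hE] at h
  have h2 : D ∣ s := (Nat.dvd_add_right ⟨t, rfl⟩).mp h
  have := Nat.eq_zero_of_dvd_of_lt h2 hsD
  omega


lemma vanish_all (i l : ℕ) (hi1 : 1 ≤ i) (p q r s : Polynomial ℂ)
    (hdvd : zpol (2*i+l+1) ∣
      (Polynomial.aeval (xv*yv) p * xv ^ i
       - Polynomial.aeval (xv*yv) q * yv ^ (i+l+1)
       + Polynomial.aeval (xv*yv) r * yv ^ i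
       - Polynomial.aeval (xv*yv) s * xv ^ (i+l+1))) :
    p = 0 ∧ q = 0 ∧ r = 0 ∧ s = 0 := by
  have hm1 : 1 ≤ 2*i+l+1 := by omega
  have h2m0 : 2*(2*i+l+1) ≠ 0 := by omega
  have hζ : IsPrimitiveRoot (Complex.exp (2 * ↑Real.pi * Complex.I / ((2*(2*i+l+1) : ℕ) : ℂ)))
      (2*(2*i+l+1)) := Complex.isPrimitiveRoot_exp _ h2m0
  set ζ : ℂ := Complex.exp (2 * ↑Real.pi * Complex.I / ((2*(2*i+l+1) : ℕ) : ℂ)) with hζdef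
  have hζ1 : ζ ^ (2*(2*i+l+1)) = 1 := hζ.pow_eq_one
  have hB : 2*(2*i+l+1) - 1 = 4*i+2*l+1 := by omega
  set P : Spoly := Polynomial.aeval (xv*yv) p * xv ^ i with hP
  set Q : Spoly := Polynomial.aeval (xv*yv) q * yv ^ (i+l+1) with hQ
  set R : Spoly := Polynomial.aeval (xv*yv) r * yv ^ i with hR
  set S : Spoly := Polynomial.aeval (xv*yv) s * xv ^ (i+l+1) with hS
  set T : Fin 4 → Spoly := ![P, -Q, R, -S] with hT
  set e : Fin 4 → ℕ := ![i, (i+l+1)*(4*i+2*l+1), i*(4*i+2*l+1), i+l+1] with he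
  have hTj : ∀ (j : Fin 4) (k : ℕ),
      sg (ζ ^ k) (ζ ^ ((2*(2*i+l+1) - 1) * k)) (T j) =
      MvPolynomial.C (ζ ^ (e j * k)) * T j := by
    intro j k
    have huv : ζ ^ k * ζ ^ ((2*(2*i+l+1) - 1) * k) = 1 := uv_one _ k hm1 ζ hζ1
    fin_cases j
    · show sg _ _ P = MvPolynomial.C (ζ ^ (i * k)) * P
      rw [hP, sg_px _ _ huv]
      congr 2
      rw [← pow_mul, Nat.mul_comm]
    · show sg _ _ (-Q) = MvPolynomial.C (ζ ^ ((i+l+1)*(4*i+2*l+1) * k)) * (-Q)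
      have hv : (ζ ^ ((2*(2*i+l+1) - 1) * k)) ^ (i+l+1)
          = ζ ^ ((i+l+1)*(4*i+2*l+1) * k) := by
        rw [← pow_mul]; congr 1; rw [hB]; ring
      rw [map_neg, hQ, sg_py _ _ huv, hv]; ring
    · show sg _ _ R = MvPolynomial.C (ζ ^ (i*(4*i+2*l+1) * k)) * R
      have hv : (ζ ^ ((2*(2*i+l+1) - 1) * k)) ^ i
          = ζ ^ (i*(4*i+2*l+1) * k) := by
        rw [← pow_mul]; congr 1; rw [hB]; ring
      rw [hR, sg_py _ _ huv, hv]
    · show sg _ _ (-S) = MvPolynomial.C (ζ ^ ((i+l+1) * k)) * (-S)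
      have hv : (ζ ^ k) ^ (i+l+1) = ζ ^ ((i+l+1) * k) := by
        rw [← pow_mul, Nat.mul_comm]
      rw [map_neg, hS, sg_px _ _ huv, hv]; ring
  have hsum : zpol (2*i+l+1) ∣ ∑ j, T j := by
    have : ∑ j, T j = P - Q + R - S := by
      rw [Fin.sum_univ_four]
      show P + (-Q) + R + (-S) = _
      ring
    rw [this]; exact hdvd
  -- extract each piece
  have hdP : zpol (2*i+l+1) ∣ P := by
    have := extract (2*i+l+1) hm1 ζ hζ T e hTj hsum (3*i+2*l+2) 0
      ⟨1, by show 3*i+2*l+2 + i = _; ring⟩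
      (by
        intro j hj; fin_cases j
        · exact absurd rfl hj
        · show ¬ 2*(2*i+l+1) ∣ 3*i+2*l+2 + (i+l+1)*(4*i+2*l+1)
          exact not_dvd_helper _ (i+l+1) (2*i+l+1) _ (by ring) (by omega) (by omega)
        · show ¬ 2*(2*i+l+1) ∣ 3*i+2*l+2 + i*(4*i+2*l+1)
          exact not_dvd_helper _ i (2*i+2*l+2) _ (by ring) (by omega) (by omega)
        · show ¬ 2*(2*i+l+1) ∣ 3*i+2*l+2 + (i+l+1)
          exact not_dvd_helper _ 1 (l+1) _ (by ring) (by omega) (by omega))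
    exact this
  have hdQ : zpol (2*i+l+1) ∣ Q := by
    have := extract (2*i+l+1) hm1 ζ hζ T e hTj hsum (i+l+1) 1
      ⟨i+l+1, by show (i+l+1) + (i+l+1)*(4*i+2*l+1) = _; ring⟩
      (by
        intro j hj; fin_cases j
        · show ¬ 2*(2*i+l+1) ∣ (i+l+1) + i
          exact not_dvd_helper _ 0 (2*i+l+1) _ (by ring) (by omega) (by omega)
        · exact absurd rfl hj
        · show ¬ 2*(2*i+l+1) ∣ (i+l+1) + i*(4*i+2*l+1)
          exact not_dvd_helper _ i (l+1) _ (by ring) (by omega) (by omega)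
        · show ¬ 2*(2*i+l+1) ∣ (i+l+1) + (i+l+1)
          exact not_dvd_helper _ 0 (2*i+2*l+2) _ (by ring) (by omega) (by omega))
    have h2 : T 1 = -Q := rfl
    rw [h2] at this
    exact (dvd_neg).mp this
  have hdR : zpol (2*i+l+1) ∣ R := by
    have := extract (2*i+l+1) hm1 ζ hζ T e hTj hsum i 2
      ⟨i, by show i + i*(4*i+2*l+1) = _; ring⟩
      (by
        intro j hj; fin_cases j
        · show ¬ 2*(2*i+l+1) ∣ i + i
          exact not_dvd_helper _ 0 (2*i) _ (by ring) (by omega) (by omega)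
        · show ¬ 2*(2*i+l+1) ∣ i + (i+l+1)*(4*i+2*l+1)
          exact not_dvd_helper _ (i+l) (4*i+l+1) _ (by ring) (by omega) (by omega)
        · exact absurd rfl hj
        · show ¬ 2*(2*i+l+1) ∣ i + (i+l+1)
          exact not_dvd_helper _ 0 (2*i+l+1) _ (by ring) (by omega) (by omega))
    exact this
  have hdS : zpol (2*i+l+1) ∣ S := by
    have := extract (2*i+l+1) hm1 ζ hζ T e hTj hsum (3*i+l+1) 3
      ⟨1, by show 3*i+l+1 + (i+l+1) = _; ring⟩
      (by
        intro j hj; fin_cases j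
        · show ¬ 2*(2*i+l+1) ∣ 3*i+l+1 + i
          exact not_dvd_helper _ 0 (4*i+l+1) _ (by ring) (by omega) (by omega)
        · show ¬ 2*(2*i+l+1) ∣ 3*i+l+1 + (i+l+1)*(4*i+2*l+1)
          exact not_dvd_helper _ (i+l+1) (2*i) _ (by ring) (by omega) (by omega)
        · show ¬ 2*(2*i+l+1) ∣ 3*i+l+1 + i*(4*i+2*l+1)
          exact not_dvd_helper _ i (2*i+l+1) _ (by ring) (by omega) (by omega)
        · exact absurd rfl hj)
    have h2 : T 3 = -S := rfl
    rw [h2] at this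
    exact (dvd_neg).mp this
  exact ⟨vanish_x _ i hm1 p hdP, vanish_y _ _ hm1 q hdQ,
    vanish_y _ i hm1 r hdR, vanish_x _ _ hm1 s hdS⟩


/-- reducibility of a pair to `Y`-free representatives modulo the columns of `A`. -/
def Red (m i : ℕ) (a b : Rpoly) : Prop :=
  ∃ (p q : Polynomial ℂ) (u0 u1 : Rpoly),
    a = Polynomial.aeval Xv p + (Yv * u0 + 2 * Xv^(m-i) * u1) ∧
    b = Polynomial.aeval Xv q + (2 * Xv^i * u0 + Yv * u1)

lemma red_add {m i : ℕ} {a b a' b' : Rpoly} (h : Red m i a b) (h' : Red m i a' b') :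
    Red m i (a + a') (b + b') := by
  obtain ⟨p, q, u0, u1, rfl, rfl⟩ := h
  obtain ⟨p', q', u0', u1', rfl, rfl⟩ := h'
  exact ⟨p + p', q + q', u0 + u0', u1 + u1', by rw [map_add]; ring, by rw [map_add]; ring⟩

lemma red_mul_X {m i : ℕ} (n : Fin 2) {a b : Rpoly} (h : Red m i a b) :
    Red m i (X n * a) (X n * b) := by
  obtain ⟨p, q, u0, u1, rfl, rfl⟩ := h
  fin_cases n
  · exact ⟨Polynomial.X * p, Polynomial.X * q, Xv * u0, Xv * u1,
      by rw [map_mul, Polynomial.aeval_X]; show Xv * _ = _; ring,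
      by rw [map_mul, Polynomial.aeval_X]; show Xv * _ = _; ring⟩
  · refine ⟨-(2 * (Polynomial.X ^ (m-i) * q)), -(2 * (Polynomial.X ^ i * p)),
      Polynomial.aeval Xv p + Yv * u0, Polynomial.aeval Xv q + Yv * u1, ?_, ?_⟩
    · show Yv * _ = _
      rw [map_neg, map_mul, map_mul, map_pow, Polynomial.aeval_X, map_ofNat]
      ring
    · show Yv * _ = _
      rw [map_neg, map_mul, map_mul, map_pow, Polynomial.aeval_X, map_ofNat]
      ring

lemma red_smul {m i : ℕ} (r : Rpoly) : ∀ a b : Rpoly, Red m i a b → Red m i (r * a) (r * b) := by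
  induction r using MvPolynomial.induction_on with
  | C c =>
    intro a b h
    obtain ⟨p, q, u0, u1, rfl, rfl⟩ := h
    exact ⟨Polynomial.C c * p, Polynomial.C c * q, MvPolynomial.C c * u0, MvPolynomial.C c * u1,
      by rw [map_mul, Polynomial.aeval_C, MvPolynomial.algebraMap_eq]; show MvPolynomial.C c * _ = _; ring,
      by rw [map_mul, Polynomial.aeval_C, MvPolynomial.algebraMap_eq]; show MvPolynomial.C c * _ = _; ring⟩
  | add r1 r2 ih1 ih2 =>
    intro a b h
    have := red_add (ih1 a b h) (ih2 a b h)
    rw [show r1 * a + r2 * a = (r1 + r2) * a by ring,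
        show r1 * b + r2 * b = (r1 + r2) * b by ring] at this
    exact this
  | mul_X r1 n ih =>
    intro a b h
    have := red_mul_X n (ih a b h)
    rw [show X n * (r1 * a) = r1 * X n * a by ring,
        show X n * (r1 * b) = r1 * X n * b by ring] at this
    exact this

lemma red_all (m i : ℕ) (a b : Rpoly) : Red m i a b := by
  have h10 : Red m i 1 0 := ⟨1, 0, 0, 0, by simp, by simp⟩
  have h01 : Red m i 0 1 := ⟨0, 1, 0, 0, by simp, by simp⟩
  have ha : Red m i (a * 1) (a * 0) := red_smul a 1 0 h10
  have hb : Red m i (b * 0) (b * 1) := red_smul b 0 1 h01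
  rw [mul_one, mul_zero] at ha
  rw [mul_one, mul_zero] at hb
  have := red_add ha hb
  rw [add_zero, zero_add] at this
  exact this


def bigS (m i : ℕ) (v w : Fin 2 → Rpoly) : Spoly :=
  phi m (v 0) * xv ^ i - phi m (v 1) * yv ^ (m-i)
  + phi m (w 0) * yv ^ i - phi m (w 1) * xv ^ (m-i)

noncomputable def F (m i : ℕ) :
    ((Fin 2 → Rpoly) × (Fin 2 → Rpoly)) →ₗ[Rpoly] (Spoly ⧸ Ideal.span {zpol m}) where
  toFun vw := Ideal.Quotient.mk _ (bigS m i vw.1 vw.2)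
  map_add' := by
    intro x y
    show Ideal.Quotient.mk _ _ = Ideal.Quotient.mk _ _ + Ideal.Quotient.mk _ _
    rw [← map_add]
    congr 1
    simp only [bigS, Prod.fst_add, Prod.snd_add, Pi.add_apply, map_add]
    ring
  map_smul' := by
    intro r x
    show Ideal.Quotient.mk _ _ = r • Ideal.Quotient.mk _ _
    rw [smul_def, ← map_mul]
    congr 1
    simp only [bigS, Prod.smul_fst, Prod.smul_snd, Pi.smul_apply, smul_eq_mul, map_mul]
    ring

lemma F_apply (m i : ℕ) (v w : Fin 2 → Rpoly) :
    F m i (v, w) = Ideal.Quotient.mk (Ideal.span {zpol m}) (bigS m i v w) := rfl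

abbrev NA (m i : ℕ) : Submodule Rpoly (Fin 2 → Rpoly) :=
  LinearMap.range (Matrix.mulVecLin !![Yv, 2 * Xv ^ (m - i); 2 * Xv ^ i, Yv])

lemma mem_NA_iff (m i : ℕ) (w : Fin 2 → Rpoly) :
    w ∈ NA m i ↔ ∃ u0 u1 : Rpoly,
      w 0 = Yv * u0 + 2 * Xv ^ (m-i) * u1 ∧ w 1 = 2 * Xv ^ i * u0 + Yv * u1 := by
  constructor
  · rintro ⟨u, rfl⟩
    refine ⟨u 0, u 1, ?_, ?_⟩ <;>
      simp [Matrix.mulVecLin_apply, Matrix.mulVec, dotProduct, Matrix.vecHead,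
        Matrix.vecTail, Fin.sum_univ_two] <;> ring
  · rintro ⟨u0, u1, h0, h1⟩
    refine ⟨![u0, u1], ?_⟩
    funext j
    fin_cases j <;>
      simp [Matrix.mulVecLin_apply, Matrix.mulVec, dotProduct, Matrix.vecHead,
        Matrix.vecTail, Fin.sum_univ_two] <;>
      [rw [h0]; rw [h1]] <;> ring

lemma F_cols (m i : ℕ) (him : i ≤ m) (u0 u1 t0 t1 : Rpoly) :
    F m i (![Yv * u0 + 2 * Xv ^ (m-i) * u1, 2 * Xv ^ i * u0 + Yv * u1],
           ![Yv * t0 + 2 * Xv ^ (m-i) * t1, 2 * Xv ^ i * t0 + Yv * t1]) = 0 := by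
  rw [F_apply, Ideal.Quotient.eq_zero_iff_mem, Ideal.mem_span_singleton]
  refine ⟨phi m u0 * xv ^ i + phi m u1 * yv ^ (m-i)
    - phi m t0 * yv ^ i - phi m t1 * xv ^ (m-i), ?_⟩
  obtain ⟨j, rfl⟩ : ∃ j, m = i + j := ⟨m - i, by omega⟩
  have hmi : i + j - i = j := by omega
  simp only [bigS, hmi, Matrix.cons_val_zero, Matrix.cons_val_one, Matrix.head_cons,
    map_add, map_mul, map_pow, phi_X, phi_Y, map_ofNat, zpol]
  ring

lemma ker_F (m i : ℕ) (hi1 : 1 ≤ i) (hi2 : 2*i < m) :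
    LinearMap.ker (F m i) = (NA m i).prod (NA m i) := by
  have him : i ≤ m := by omega
  apply le_antisymm
  · rintro ⟨v, w⟩ hvw
    rw [LinearMap.mem_ker] at hvw
    obtain ⟨p, q, u0, u1, hv0, hv1⟩ := red_all m i (v 0) (v 1)
    obtain ⟨r, s, t0, t1, hw0, hw1⟩ := red_all m i (w 0) (w 1)
    have hvsplit : v = ![Polynomial.aeval Xv p, Polynomial.aeval Xv q]
        + ![Yv * u0 + 2 * Xv ^ (m-i) * u1, 2 * Xv ^ i * u0 + Yv * u1] := by
      funext jj; fin_cases jj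
      · show v 0 = _; rw [hv0]; simp
      · show v 1 = _; rw [hv1]; simp
    have hwsplit : w = ![Polynomial.aeval Xv r, Polynomial.aeval Xv s]
        + ![Yv * t0 + 2 * Xv ^ (m-i) * t1, 2 * Xv ^ i * t0 + Yv * t1] := by
      funext jj; fin_cases jj
      · show w 0 = _; rw [hw0]; simp
      · show w 1 = _; rw [hw1]; simp
    have hsum : ((v, w) : (Fin 2 → Rpoly) × (Fin 2 → Rpoly))
        = (![Polynomial.aeval Xv p, Polynomial.aeval Xv q],
           ![Polynomial.aeval Xv r, Polynomial.aeval Xv s])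
          + (![Yv * u0 + 2 * Xv ^ (m-i) * u1, 2 * Xv ^ i * u0 + Yv * u1],
             ![Yv * t0 + 2 * Xv ^ (m-i) * t1, 2 * Xv ^ i * t0 + Yv * t1]) := by
      rw [Prod.mk_add_mk, ← hvsplit, ← hwsplit]
    rw [hsum, map_add, F_cols m i him, add_zero] at hvw
    rw [F_apply, Ideal.Quotient.eq_zero_iff_mem, Ideal.mem_span_singleton] at hvw
    -- now the analytic part
    obtain ⟨l, rfl⟩ : ∃ l, m = 2*i+l+1 := ⟨m - (2*i+1), by omega⟩
    have hmi : 2*i+l+1 - i = i+l+1 := by omega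
    have hbig : bigS (2*i+l+1) i
        ![Polynomial.aeval Xv p, Polynomial.aeval Xv q]
        ![Polynomial.aeval Xv r, Polynomial.aeval Xv s]
        = Polynomial.aeval (xv*yv) p * xv ^ i
          - Polynomial.aeval (xv*yv) q * yv ^ (i+l+1)
          + Polynomial.aeval (xv*yv) r * yv ^ i
          - Polynomial.aeval (xv*yv) s * xv ^ (i+l+1) := by
      simp only [bigS, hmi, Matrix.cons_val_zero, Matrix.cons_val_one, Matrix.head_cons,
        phi_aevalX]
    rw [hbig] at hvw
    obtain ⟨hp, hq, hr, hs⟩ := vanish_all i l hi1 p q r s hvw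
    subst hp; subst hq; subst hr; subst hs
    rw [Submodule.mem_prod]
    constructor
    · show v ∈ NA _ _
      rw [mem_NA_iff]
      exact ⟨u0, u1, by rw [hv0]; simp, by rw [hv1]; simp⟩
    · show w ∈ NA _ _
      rw [mem_NA_iff]
      exact ⟨t0, t1, by rw [hw0]; simp, by rw [hw1]; simp⟩
  · rintro ⟨v, w⟩ h
    rw [Submodule.mem_prod] at h
    obtain ⟨hv, hw⟩ := h
    have hv2 : v ∈ NA m i := hv
    have hw2 : w ∈ NA m i := hw
    rw [mem_NA_iff] at hv2 hw2
    clear hv hw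
    have hv := hv2; have hw := hw2
    obtain ⟨u0, u1, hv0, hv1⟩ := hv
    obtain ⟨t0, t1, hw0, hw1⟩ := hw
    rw [LinearMap.mem_ker]
    have hveq : v = ![Yv * u0 + 2 * Xv ^ (m-i) * u1, 2 * Xv ^ i * u0 + Yv * u1] := by
      funext jj; fin_cases jj
      · show v 0 = _; rw [hv0]; simp
      · show v 1 = _; rw [hv1]; simp
    have hweq : w = ![Yv * t0 + 2 * Xv ^ (m-i) * t1, 2 * Xv ^ i * t0 + Yv * t1] := by
      funext jj; fin_cases jj
      · show w 0 = _; rw [hw0]; simp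
      · show w 1 = _; rw [hw1]; simp
    rw [show ((v, w) : (Fin 2 → Rpoly) × (Fin 2 → Rpoly)) = (_, _) from
      Prod.ext hveq hweq]
    exact F_cols m i him u0 u1 t0 t1

lemma range_F (m i : ℕ) :
    LinearMap.range (F m i) = Submodule.span Rpoly
      {Ideal.Quotient.mk (Ideal.span {zpol m}) (xv ^ i),
       Ideal.Quotient.mk (Ideal.span {zpol m}) (yv ^ i),
       Ideal.Quotient.mk (Ideal.span {zpol m}) (xv ^ (m - i)),
       Ideal.Quotient.mk (Ideal.span {zpol m}) (yv ^ (m - i))} := by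
  have h1 : Ideal.Quotient.mk (Ideal.span {zpol m}) (xv ^ i) ∈ Submodule.span Rpoly
      {Ideal.Quotient.mk (Ideal.span {zpol m}) (xv ^ i),
       Ideal.Quotient.mk (Ideal.span {zpol m}) (yv ^ i),
       Ideal.Quotient.mk (Ideal.span {zpol m}) (xv ^ (m - i)),
       Ideal.Quotient.mk (Ideal.span {zpol m}) (yv ^ (m - i))} :=
    Submodule.subset_span (Set.mem_insert _ _)
  have h2 : Ideal.Quotient.mk (Ideal.span {zpol m}) (yv ^ i) ∈ Submodule.span Rpoly
      {Ideal.Quotient.mk (Ideal.span {zpol m}) (xv ^ i),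
       Ideal.Quotient.mk (Ideal.span {zpol m}) (yv ^ i),
       Ideal.Quotient.mk (Ideal.span {zpol m}) (xv ^ (m - i)),
       Ideal.Quotient.mk (Ideal.span {zpol m}) (yv ^ (m - i))} :=
    Submodule.subset_span (Set.mem_insert_of_mem _ (Set.mem_insert _ _))
  have h3 : Ideal.Quotient.mk (Ideal.span {zpol m}) (xv ^ (m-i)) ∈ Submodule.span Rpoly
      {Ideal.Quotient.mk (Ideal.span {zpol m}) (xv ^ i),
       Ideal.Quotient.mk (Ideal.span {zpol m}) (yv ^ i),
       Ideal.Quotient.mk (Ideal.span {zpol m}) (xv ^ (m - i)),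
       Ideal.Quotient.mk (Ideal.span {zpol m}) (yv ^ (m - i))} :=
    Submodule.subset_span (Set.mem_insert_of_mem _ (Set.mem_insert_of_mem _ (Set.mem_insert _ _)))
  have h4 : Ideal.Quotient.mk (Ideal.span {zpol m}) (yv ^ (m-i)) ∈ Submodule.span Rpoly
      {Ideal.Quotient.mk (Ideal.span {zpol m}) (xv ^ i),
       Ideal.Quotient.mk (Ideal.span {zpol m}) (yv ^ i),
       Ideal.Quotient.mk (Ideal.span {zpol m}) (xv ^ (m - i)),
       Ideal.Quotient.mk (Ideal.span {zpol m}) (yv ^ (m - i))} :=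
    Submodule.subset_span (Set.mem_insert_of_mem _ (Set.mem_insert_of_mem _
      (Set.mem_insert_of_mem _ (Set.mem_singleton _))))
  apply le_antisymm
  · rintro g ⟨⟨v, w⟩, rfl⟩
    rw [F_apply]
    have key : Ideal.Quotient.mk (Ideal.span {zpol m}) (bigS m i v w)
        = (v 0) • Ideal.Quotient.mk (Ideal.span {zpol m}) (xv ^ i)
          + (-(v 1)) • Ideal.Quotient.mk (Ideal.span {zpol m}) (yv ^ (m-i))
          + (w 0) • Ideal.Quotient.mk (Ideal.span {zpol m}) (yv ^ i)
          + (-(w 1)) • Ideal.Quotient.mk (Ideal.span {zpol m}) (xv ^ (m-i)) := by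
      simp only [smul_def, ← map_mul, ← map_add]
      congr 1
      simp only [bigS, map_neg]
      ring
    rw [key]
    exact add_mem (add_mem (add_mem (Submodule.smul_mem _ _ h1)
      (Submodule.smul_mem _ _ h4)) (Submodule.smul_mem _ _ h2))
      (Submodule.smul_mem _ _ h3)
  · rw [Submodule.span_le]
    rintro g hg
    simp only [Set.mem_insert_iff, Set.mem_singleton_iff] at hg
    rcases hg with rfl | rfl | rfl | rfl
    · refine ⟨(![1, 0], ![0, 0]), ?_⟩
      rw [F_apply]; congr 1
      simp only [bigS, Matrix.cons_val_zero, Matrix.cons_val_one, Matrix.head_cons,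
        map_one, map_zero]
      ring
    · refine ⟨(![0, 0], ![1, 0]), ?_⟩
      rw [F_apply]; congr 1
      simp only [bigS, Matrix.cons_val_zero, Matrix.cons_val_one, Matrix.head_cons,
        map_one, map_zero]
      ring
    · refine ⟨(![0, 0], ![0, -1]), ?_⟩
      rw [F_apply]; congr 1
      simp only [bigS, Matrix.cons_val_zero, Matrix.cons_val_one, Matrix.head_cons,
        map_one, map_zero, map_neg]
      ring
    · refine ⟨(![0, -1], ![0, 0]), ?_⟩
      rw [F_apply]; congr 1
      simp only [bigS, Matrix.cons_val_zero, Matrix.cons_val_one, Matrix.head_cons,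
        map_one, map_zero, map_neg]
      ring

end Stmt11

theorem stmt11 (m : ℕ) (hm : 3 ≤ m) (i : ℕ) (hi1 : 1 ≤ i) (hi2 : 2 * i < m) :
    letI : Module Rpoly (Spoly ⧸ Ideal.span {zpol m}) :=
      ((Ideal.Quotient.mk (Ideal.span {zpol m})).comp (phi m)).toModule
    let M : Submodule Rpoly (Spoly ⧸ Ideal.span {zpol m}) :=
      Submodule.span Rpoly
        {Ideal.Quotient.mk (Ideal.span {zpol m}) (xv ^ i),
         Ideal.Quotient.mk (Ideal.span {zpol m}) (yv ^ i),
         Ideal.Quotient.mk (Ideal.span {zpol m}) (xv ^ (m - i)),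
         Ideal.Quotient.mk (Ideal.span {zpol m}) (yv ^ (m - i))}
    Nonempty (M ≃ₗ[Rpoly]
      (coker !![Yv, 2 * Xv ^ (m - i); 2 * Xv ^ i, Yv]) ×
      (coker !![Yv, 2 * Xv ^ (m - i); 2 * Xv ^ i, Yv])) := by
  intro M
  letI : Module Rpoly (Spoly ⧸ Ideal.span {zpol m}) := Stmt11.qmod m
  have hker := Stmt11.ker_F m i hi1 hi2
  have hrange := Stmt11.range_F m i
  refine ⟨?_⟩
  have eA : M ≃ₗ[Rpoly] LinearMap.range (Stmt11.F m i) :=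
    LinearEquiv.ofEq _ _ hrange.symm
  have eB := ((Stmt11.F m i).quotKerEquivRange).symm
  have eC := Submodule.quotEquivOfEq _ _ hker
  set π := ((Stmt11.NA m i).mkQ).prodMap ((Stmt11.NA m i).mkQ) with hπ
  have hsurj : Function.Surjective π :=
    (Submodule.mkQ_surjective _).prodMap (Submodule.mkQ_surjective _)
  have hkerπ : LinearMap.ker π = (Stmt11.NA m i).prod (Stmt11.NA m i) := by
    rw [hπ, LinearMap.ker_prodMap, Submodule.ker_mkQ]
  have eD := Submodule.quotEquivOfEq _ _ hkerπ.symm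
  have eE := LinearMap.quotKerEquivOfSurjective π hsurj
  exact eA.trans (eB.trans (eC.trans (eD.trans eE)))
end
end
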